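/- arXiv:1104.0354 — 5 statements merged into one kernel-verified Lean document; each statement's English description precedes it below -/
import Mathlib

section
/- Let Γᶜ ⊆ [n₁]×[n₂] be a set of matrix entries containing at most d entries in each row and each column. Let U ∈ ℝ^{n₁×r}, V ∈ ℝ^{n₂×r} have orthonormal columns with max_i ‖Uᵀeᵢ‖ ≤ √(μr/n₁), max_j ‖Vᵀeⱼ‖ ≤ √(μr/n₂). Define α = √(μrd/n₁) + √(μrd/n₂) + √(μrd/max(n₁,n₂)), and assume √(μrd/n₁)·√(μrd/n₂) ≤ √(μrd/max(n₁,n₂)). Then for every matrix M ∈ ℝ^{n₁×n₂}, ‖P_T(P_{Γᶜ}(M))‖_∞ ≤ α ‖P_{Γᶜ}(M)‖_∞, where P_T(W) = UUᵀW + WVVᵀ − UUᵀWVVᵀ and P_{Γᶜ} sets entries outside Γᶜ to zero, and ‖·‖_∞ is the entrywise maximum absolute value. -/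
open Matrix

noncomputable section

def frobNorm {m n : ℕ} (M : Matrix (Fin m) (Fin n) ℝ) : ℝ :=
  Real.sqrt (∑ i, ∑ j, (M i j) ^ 2)

def infNorm {m n : ℕ} (M : Matrix (Fin m) (Fin n) ℝ) : ℝ :=
  ⨆ i, ⨆ j, |M i j|

def specNorm {m n : ℕ} (M : Matrix (Fin m) (Fin n) ℝ) : ℝ :=
  ‖LinearMap.toContinuousLinearMap (Matrix.toEuclideanLin M)‖

open Classical in
def projSet {m n : ℕ} (S : Set (Fin m × Fin n)) (M : Matrix (Fin m) (Fin n) ℝ) :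
    Matrix (Fin m) (Fin n) ℝ :=
  Matrix.of fun i j => if (i, j) ∈ S then M i j else 0

def projT {n₁ n₂ r : ℕ} (U : Matrix (Fin n₁) (Fin r) ℝ) (V : Matrix (Fin n₂) (Fin r) ℝ)
    (M : Matrix (Fin n₁) (Fin n₂) ℝ) : Matrix (Fin n₁) (Fin n₂) ℝ :=
  U * Uᵀ * M + M * (V * Vᵀ) - U * Uᵀ * M * (V * Vᵀ)

def finner {m n : ℕ} (A B : Matrix (Fin m) (Fin n) ℝ) : ℝ := ∑ i, ∑ j, A i j * B i j

def opNormF {m n : ℕ} (A : Matrix (Fin m) (Fin n) ℝ →ₗ[ℝ] Matrix (Fin m) (Fin n) ℝ) : ℝ :=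
  sInf {c | 0 ≤ c ∧ ∀ Z, frobNorm (A Z) ≤ c * frobNorm Z}

open Classical in
def projSetL {m n : ℕ} (S : Set (Fin m × Fin n)) :
    Matrix (Fin m) (Fin n) ℝ →ₗ[ℝ] Matrix (Fin m) (Fin n) ℝ where
  toFun := projSet S
  map_add' A B := by
    funext i j
    simp only [projSet, Matrix.of_apply, Matrix.add_apply]
    split <;> simp
  map_smul' c A := by
    funext i j
    simp only [projSet, Matrix.of_apply, Matrix.smul_apply, RingHom.id_apply, smul_eq_mul]
    split <;> simp

open Classical in
def rowCount {m n : ℕ} (S : Set (Fin m × Fin n)) (i : Fin m) : ℕ :=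
  (Finset.univ.filter fun j => (i, j) ∈ S).card

open Classical in
def colCount {m n : ℕ} (S : Set (Fin m × Fin n)) (j : Fin n) : ℕ :=
  (Finset.univ.filter fun i => (i, j) ∈ S).card

def alphaP (μ : ℝ) (r d n₁ n₂ : ℕ) : ℝ :=
  Real.sqrt (μ * r * d / n₁) + Real.sqrt (μ * r * d / n₂) +
    Real.sqrt (μ * r * d / (max n₁ n₂ : ℕ))

def sgnM {m n : ℕ} (M : Matrix (Fin m) (Fin n) ℝ) : Matrix (Fin m) (Fin n) ℝ :=
  Matrix.of fun i j => Real.sign (M i j)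

lemma orth_sum {n r : ℕ} (U : Matrix (Fin n) (Fin r) ℝ) (hU : Uᵀ * U = 1)
    (c c' : Fin r) : ∑ k, U k c * U k c' = if c = c' then 1 else 0 := by
  have h := congrFun (congrFun hU c) c'
  simpa [Matrix.mul_apply, Matrix.one_apply, Matrix.transpose_apply] using h

lemma mulvec_sq {n r : ℕ} (U : Matrix (Fin n) (Fin r) ℝ) (hU : Uᵀ * U = 1)
    (a : Fin r → ℝ) : ∑ k, (∑ c, U k c * a c)^2 = ∑ c, (a c)^2 := by
  have h1 : ∀ k : Fin n, (∑ c, U k c * a c)^2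
      = ∑ c, ∑ c', (a c * a c') * (U k c * U k c') := by
    intro k
    rw [sq, Finset.sum_mul_sum]
    exact Finset.sum_congr rfl fun c _ => Finset.sum_congr rfl fun c' _ => by ring
  calc ∑ k, (∑ c, U k c * a c)^2
      = ∑ k, ∑ c, ∑ c', (a c * a c') * (U k c * U k c') := by
        exact Finset.sum_congr rfl fun k _ => h1 k
    _ = ∑ c, ∑ c', (a c * a c') * ∑ k, U k c * U k c' := by
        rw [Finset.sum_comm]
        refine Finset.sum_congr rfl fun c _ => ?_
        rw [Finset.sum_comm]
        exact Finset.sum_congr rfl fun c' _ => (Finset.mul_sum _ _ _).symm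
    _ = ∑ c, (a c)^2 := by
        simp [orth_sum U hU, mul_ite, sq]

lemma contraction {n r : ℕ} (U : Matrix (Fin n) (Fin r) ℝ) (hU : Uᵀ * U = 1)
    (w : Fin n → ℝ) : ∑ c, (∑ k, U k c * w k)^2 ≤ ∑ k, (w k)^2 := by
  set q : Fin r → ℝ := fun c => ∑ k, U k c * w k with hq
  set p : Fin n → ℝ := fun k => ∑ c, U k c * q c with hp
  have hpq : ∑ k, (p k)^2 = ∑ c, (q c)^2 := mulvec_sq U hU q
  have hwp : ∑ k, w k * p k = ∑ c, (q c)^2 := by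
    calc ∑ k, w k * p k = ∑ k, ∑ c, (U k c * w k) * q c := by
          refine Finset.sum_congr rfl fun k _ => ?_
          rw [hp, Finset.mul_sum]
          exact Finset.sum_congr rfl fun c _ => by ring
      _ = ∑ c, (∑ k, U k c * w k) * q c := by
          rw [Finset.sum_comm]
          exact Finset.sum_congr rfl fun c _ => (Finset.sum_mul _ _ _).symm
      _ = ∑ c, (q c)^2 := Finset.sum_congr rfl fun c _ => by
          show q c * q c = q c ^ 2
          rw [sq]
  have hexp : ∑ k, (w k - p k)^2
      = ∑ k, (w k)^2 - 2 * ∑ k, w k * p k + ∑ k, (p k)^2 := by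
    rw [Finset.mul_sum, ← Finset.sum_sub_distrib, ← Finset.sum_add_distrib]
    exact Finset.sum_congr rfl fun k _ => by ring
  have hnn : 0 ≤ ∑ k, (w k - p k)^2 := Finset.sum_nonneg fun k _ => sq_nonneg _
  rw [hexp, hwp, hpq] at hnn
  linarith

lemma abs_sum_le_cs {ι : Type*} (s : Finset ι) (f g : ι → ℝ) :
    |∑ i ∈ s, f i * g i| ≤
      Real.sqrt (∑ i ∈ s, f i ^ 2) * Real.sqrt (∑ i ∈ s, g i ^ 2) := by
  rw [← Real.sqrt_sq_eq_abs, ← Real.sqrt_mul (Finset.sum_nonneg fun i _ => sq_nonneg _)]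
  exact Real.sqrt_le_sqrt (Finset.sum_mul_sq_le_sq_mul_sq s f g)

lemma term1_bound {n₁ n₂ r : ℕ} (U : Matrix (Fin n₁) (Fin r) ℝ) (hU : Uᵀ * U = 1)
    (W : Matrix (Fin n₁) (Fin n₂) ℝ) (B ρ δ : ℝ) (hB : 0 ≤ B) (hρ : 0 ≤ ρ) (hδ : 0 ≤ δ)
    (hrowU : ∀ i, ∑ c, (U i c)^2 ≤ ρ)
    (hcolW : ∀ j, ∑ k, (W k j)^2 ≤ δ * B^2)
    (i : Fin n₁) (j : Fin n₂) :
    |(U * Uᵀ * W) i j| ≤ Real.sqrt (ρ * δ) * B := by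
  have e1 : (U * Uᵀ * W) i j = ∑ c, U i c * (∑ k, U k c * W k j) := by
    simp only [Matrix.mul_apply, Matrix.transpose_apply]
    calc ∑ k, (∑ c, U i c * U k c) * W k j
        = ∑ k, ∑ c, U i c * (U k c * W k j) := by
          refine Finset.sum_congr rfl fun k _ => ?_
          rw [Finset.sum_mul]
          exact Finset.sum_congr rfl fun c _ => by ring
      _ = ∑ c, ∑ k, U i c * (U k c * W k j) := Finset.sum_comm
      _ = ∑ c, U i c * ∑ k, U k c * W k j := by
          exact Finset.sum_congr rfl fun c _ => (Finset.mul_sum _ _ _).symm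
  rw [e1]
  have hcs := abs_sum_le_cs Finset.univ (fun c => U i c) (fun c => ∑ k, U k c * W k j)
  have h2 : ∑ c, (∑ k, U k c * W k j)^2 ≤ δ * B^2 :=
    le_trans (contraction U hU fun k => W k j) (hcolW j)
  have h3 : Real.sqrt (∑ c, (U i c)^2) ≤ Real.sqrt ρ := Real.sqrt_le_sqrt (hrowU i)
  have h4 : Real.sqrt (∑ c, (∑ k, U k c * W k j)^2) ≤ Real.sqrt (δ * B^2) :=
    Real.sqrt_le_sqrt h2
  have h5 : Real.sqrt ρ * Real.sqrt (δ * B^2) = Real.sqrt (ρ * δ) * B := by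
    rw [Real.sqrt_mul hδ, Real.sqrt_sq hB, Real.sqrt_mul hρ]
    ring
  calc |∑ c, U i c * (∑ k, U k c * W k j)|
      ≤ Real.sqrt (∑ c, (U i c)^2) * Real.sqrt (∑ c, (∑ k, U k c * W k j)^2) := hcs
    _ ≤ Real.sqrt ρ * Real.sqrt (δ * B^2) :=
        mul_le_mul h3 h4 (Real.sqrt_nonneg _) (Real.sqrt_nonneg _)
    _ = Real.sqrt (ρ * δ) * B := h5

open Classical in
lemma term3_bound {n₁ n₂ r d : ℕ} (U : Matrix (Fin n₁) (Fin r) ℝ)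
    (V : Matrix (Fin n₂) (Fin r) ℝ) (hU : Uᵀ * U = 1) (hV : Vᵀ * V = 1)
    (W : Matrix (Fin n₁) (Fin n₂) ℝ) (S : Set (Fin n₁ × Fin n₂))
    (B ρ₁ ρ₂ : ℝ) (hB : 0 ≤ B) (hρ₁ : 0 ≤ ρ₁) (hρ₂ : 0 ≤ ρ₂)
    (habs : ∀ k l, |W k l| ≤ B)
    (hWz : ∀ k l, (k, l) ∉ S → W k l = 0)
    (hrowc : ∀ k, rowCount S k ≤ d) (hcolc : ∀ l, colCount S l ≤ d)
    (hrowU : ∀ i, ∑ c, (U i c)^2 ≤ ρ₁) (hrowV : ∀ j, ∑ c, (V j c)^2 ≤ ρ₂)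
    (i : Fin n₁) (j : Fin n₂) :
    |(U * Uᵀ * W * (V * Vᵀ)) i j| ≤ Real.sqrt (ρ₁ * d) * Real.sqrt (ρ₂ * d) * B := by
  set x : Fin n₁ → ℝ := fun k => ∑ c, U i c * U k c with hx
  set y : Fin n₂ → ℝ := fun l => ∑ c, V j c * V l c with hy
  set T : Finset (Fin n₁ × Fin n₂) := Finset.univ.filter (fun p => p ∈ S) with hT
  have e3 : (U * Uᵀ * W * (V * Vᵀ)) i j = ∑ p ∈ T, (x p.1 * y p.2) * W p.1 p.2 := by
    have e0 : (U * Uᵀ * W * (V * Vᵀ)) i j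
        = ∑ p : Fin n₁ × Fin n₂, (x p.1 * y p.2) * W p.1 p.2 := by
      rw [Fintype.sum_prod_type]
      simp only [Matrix.mul_apply, Matrix.transpose_apply]
      calc ∑ l, (∑ k, (∑ c, U i c * U k c) * W k l) * (∑ c, V l c * V j c)
          = ∑ l, ∑ k, (x k * y l) * W k l := by
            refine Finset.sum_congr rfl fun l _ => ?_
            rw [Finset.sum_mul]
            refine Finset.sum_congr rfl fun k _ => ?_
            have hyl : (∑ c, V l c * V j c) = y l := by
              rw [hy]
              exact Finset.sum_congr rfl fun c _ => by ring
            rw [hyl, hx]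
            ring
        _ = ∑ k, ∑ l, (x k * y l) * W k l := Finset.sum_comm
    rw [e0]
    refine (Finset.sum_subset (Finset.subset_univ T) fun p _ hp => ?_).symm
    have hpS : p ∉ S := by simpa [hT] using hp
    rw [hWz p.1 p.2 (by simpa using hpS), mul_zero]
  have habs3 : |(U * Uᵀ * W * (V * Vᵀ)) i j| ≤ (∑ p ∈ T, |x p.1| * |y p.2|) * B := by
    rw [e3]
    refine le_trans (Finset.abs_sum_le_sum_abs _ _) ?_
    rw [Finset.sum_mul]
    refine Finset.sum_le_sum fun p _ => ?_
    rw [abs_mul, abs_mul]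
    have h1 : |x p.1| * |y p.2| * |W p.1 p.2| ≤ |x p.1| * |y p.2| * B :=
      mul_le_mul_of_nonneg_left (habs p.1 p.2)
        (mul_nonneg (abs_nonneg _) (abs_nonneg _))
    linarith
  have hsx : ∑ p ∈ T, (x p.1)^2 ≤ (d : ℝ) * ρ₁ := by
    have e1 : ∑ p ∈ T, (x p.1)^2
        = ∑ k, ∑ l, if (k, l) ∈ S then (x k)^2 else 0 := by
      rw [hT, Finset.sum_filter, Fintype.sum_prod_type]
    rw [e1]
    have e2 : ∀ k : Fin n₁, (∑ l, if (k, l) ∈ S then (x k)^2 else 0)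
        = (rowCount S k : ℝ) * (x k)^2 := by
      intro k
      rw [← Finset.sum_filter, Finset.sum_const, rowCount, nsmul_eq_mul]
    rw [Finset.sum_congr rfl fun k _ => e2 k]
    have hxsum : ∑ k, (x k)^2 ≤ ρ₁ := by
      have : ∑ k, (x k)^2 = ∑ c, (U i c)^2 := by
        rw [show (fun k => (x k)^2) = fun k => (∑ c, U k c * U i c)^2 from ?_]
        · exact mulvec_sq U hU (fun c => U i c)
        · funext k
          rw [hx]
          exact congrArg (· ^ 2) (Finset.sum_congr rfl fun c _ => by ring)
      rw [this]; exact hrowU i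
    calc ∑ k, (rowCount S k : ℝ) * (x k)^2
        ≤ ∑ k, (d : ℝ) * (x k)^2 := by
          refine Finset.sum_le_sum fun k _ => ?_
          exact mul_le_mul_of_nonneg_right (Nat.cast_le.2 (hrowc k)) (sq_nonneg _)
      _ = (d : ℝ) * ∑ k, (x k)^2 := by rw [Finset.mul_sum]
      _ ≤ (d : ℝ) * ρ₁ := mul_le_mul_of_nonneg_left hxsum (Nat.cast_nonneg d)
  have hsy : ∑ p ∈ T, (y p.2)^2 ≤ (d : ℝ) * ρ₂ := by
    have e1 : ∑ p ∈ T, (y p.2)^2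
        = ∑ k, ∑ l, if (k, l) ∈ S then (y l)^2 else 0 := by
      rw [hT, Finset.sum_filter, Fintype.sum_prod_type]
    rw [e1, Finset.sum_comm]
    have e2 : ∀ l : Fin n₂, (∑ k, if (k, l) ∈ S then (y l)^2 else 0)
        = (colCount S l : ℝ) * (y l)^2 := by
      intro l
      rw [← Finset.sum_filter, Finset.sum_const, colCount, nsmul_eq_mul]
    rw [Finset.sum_congr rfl fun l _ => e2 l]
    have hysum : ∑ l, (y l)^2 ≤ ρ₂ := by
      have : ∑ l, (y l)^2 = ∑ c, (V j c)^2 := by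
        rw [show (fun l => (y l)^2) = fun l => (∑ c, V l c * V j c)^2 from ?_]
        · exact mulvec_sq V hV (fun c => V j c)
        · funext l
          rw [hy]
          exact congrArg (· ^ 2) (Finset.sum_congr rfl fun c _ => by ring)
      rw [this]; exact hrowV j
    calc ∑ l, (colCount S l : ℝ) * (y l)^2
        ≤ ∑ l, (d : ℝ) * (y l)^2 := by
          refine Finset.sum_le_sum fun l _ => ?_
          exact mul_le_mul_of_nonneg_right (Nat.cast_le.2 (hcolc l)) (sq_nonneg _)
      _ = (d : ℝ) * ∑ l, (y l)^2 := by rw [Finset.mul_sum]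
      _ ≤ (d : ℝ) * ρ₂ := mul_le_mul_of_nonneg_left hysum (Nat.cast_nonneg d)
  have hcs : (∑ p ∈ T, |x p.1| * |y p.2|)
      ≤ Real.sqrt ((d : ℝ) * ρ₁) * Real.sqrt ((d : ℝ) * ρ₂) := by
    refine le_trans (le_abs_self _)
      ((abs_sum_le_cs T (fun p => |x p.1|) (fun p => |y p.2|)).trans ?_)
    have hx2 : ∑ p ∈ T, |x p.1| ^ 2 = ∑ p ∈ T, (x p.1)^2 :=
      Finset.sum_congr rfl fun p _ => sq_abs _
    have hy2 : ∑ p ∈ T, |y p.2| ^ 2 = ∑ p ∈ T, (y p.2)^2 :=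
      Finset.sum_congr rfl fun p _ => sq_abs _
    rw [hx2, hy2]
    exact mul_le_mul (Real.sqrt_le_sqrt hsx) (Real.sqrt_le_sqrt hsy)
      (Real.sqrt_nonneg _) (Real.sqrt_nonneg _)
  have hfin : (∑ p ∈ T, |x p.1| * |y p.2|) * B
      ≤ Real.sqrt ((d : ℝ) * ρ₁) * Real.sqrt ((d : ℝ) * ρ₂) * B :=
    mul_le_mul_of_nonneg_right hcs hB
  have heq : Real.sqrt ((d : ℝ) * ρ₁) * Real.sqrt ((d : ℝ) * ρ₂)
      = Real.sqrt (ρ₁ * d) * Real.sqrt (ρ₂ * d) := by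
    rw [mul_comm (d : ℝ) ρ₁, mul_comm (d : ℝ) ρ₂]
  rw [heq] at hfin
  exact habs3.trans hfin

theorem stmt1 (n₁ n₂ r d : ℕ) (μ : ℝ) (hμ : 1 ≤ μ)
    (S : Set (Fin n₁ × Fin n₂))
    (hrow : ∀ i, rowCount S i ≤ d) (hcol : ∀ j, colCount S j ≤ d)
    (U : Matrix (Fin n₁) (Fin r) ℝ) (V : Matrix (Fin n₂) (Fin r) ℝ)
    (hU : Uᵀ * U = 1) (hV : Vᵀ * V = 1)
    (hUinc : ∀ i, Real.sqrt (∑ k, (U i k) ^ 2) ≤ Real.sqrt (μ * r / n₁))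
    (hVinc : ∀ j, Real.sqrt (∑ k, (V j k) ^ 2) ≤ Real.sqrt (μ * r / n₂))
    (hprod : Real.sqrt (μ * r * d / n₁) * Real.sqrt (μ * r * d / n₂) ≤
      Real.sqrt (μ * r * d / ((max n₁ n₂ : ℕ) : ℝ))) :
    ∀ M : Matrix (Fin n₁) (Fin n₂) ℝ,
      infNorm (projT U V (projSet S M)) ≤ alphaP μ r d n₁ n₂ * infNorm (projSet S M) := by
  intro M
  classical
  set W := projSet S M with hWdef
  set B := infNorm W with hBdef
  have habs : ∀ k l, |W k l| ≤ B := by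
    intro k l
    have h1 : |W k l| ≤ ⨆ l', |W k l'| :=
      le_ciSup (f := fun l' => |W k l'|) (Set.Finite.bddAbove (Set.finite_range _)) l
    have h2 : (⨆ l', |W k l'|) ≤ ⨆ k', ⨆ l', |W k' l'| :=
      le_ciSup (f := fun k' => ⨆ l', |W k' l'|)
        (Set.Finite.bddAbove (Set.finite_range _)) k
    exact h1.trans h2
  have hB : 0 ≤ B :=
    Real.iSup_nonneg fun k => Real.iSup_nonneg fun l => abs_nonneg _
  have hWz : ∀ k l, (k, l) ∉ S → W k l = 0 := by
    intro k l h
    simp [hWdef, projSet, h]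
  have hsq : ∀ k l, (W k l)^2 ≤ B^2 := by
    intro k l
    rw [← sq_abs]
    exact pow_le_pow_left₀ (abs_nonneg _) (habs k l) 2
  have hcolW : ∀ l, ∑ k, (W k l)^2 ≤ (d : ℝ) * B^2 := by
    intro l
    have e : ∑ k, (W k l)^2
        = ∑ k ∈ Finset.univ.filter (fun k => (k, l) ∈ S), (W k l)^2 :=
      (Finset.sum_subset (Finset.filter_subset _ _) fun k _ hk => by
        rw [hWz k l (by simpa using hk)]; ring).symm
    rw [e]
    calc ∑ k ∈ Finset.univ.filter (fun k => (k, l) ∈ S), (W k l)^2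
        ≤ (Finset.univ.filter (fun k => (k, l) ∈ S)).card • B^2 :=
          Finset.sum_le_card_nsmul _ _ _ fun k _ => hsq k l
      _ = ((colCount S l : ℝ)) * B^2 := by rw [nsmul_eq_mul, colCount]
      _ ≤ (d : ℝ) * B^2 :=
          mul_le_mul_of_nonneg_right (Nat.cast_le.2 (hcol l)) (sq_nonneg _)
  have hrowW : ∀ k, ∑ l, (W k l)^2 ≤ (d : ℝ) * B^2 := by
    intro k
    have e : ∑ l, (W k l)^2
        = ∑ l ∈ Finset.univ.filter (fun l => (k, l) ∈ S), (W k l)^2 :=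
      (Finset.sum_subset (Finset.filter_subset _ _) fun l _ hl => by
        rw [hWz k l (by simpa using hl)]; ring).symm
    rw [e]
    calc ∑ l ∈ Finset.univ.filter (fun l => (k, l) ∈ S), (W k l)^2
        ≤ (Finset.univ.filter (fun l => (k, l) ∈ S)).card • B^2 :=
          Finset.sum_le_card_nsmul _ _ _ fun l _ => hsq k l
      _ = ((rowCount S k : ℝ)) * B^2 := by rw [nsmul_eq_mul, rowCount]
      _ ≤ (d : ℝ) * B^2 :=
          mul_le_mul_of_nonneg_right (Nat.cast_le.2 (hrow k)) (sq_nonneg _)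
  have hμ0 : (0 : ℝ) ≤ μ := by linarith
  have hρ₁0 : (0 : ℝ) ≤ μ * r / n₁ :=
    div_nonneg (mul_nonneg hμ0 (Nat.cast_nonneg r)) (Nat.cast_nonneg n₁)
  have hρ₂0 : (0 : ℝ) ≤ μ * r / n₂ :=
    div_nonneg (mul_nonneg hμ0 (Nat.cast_nonneg r)) (Nat.cast_nonneg n₂)
  have hUrow : ∀ i, ∑ c, (U i c)^2 ≤ μ * r / n₁ := by
    intro i
    have h0 : 0 ≤ ∑ c, (U i c)^2 := Finset.sum_nonneg fun c _ => sq_nonneg _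
    calc ∑ c, (U i c)^2 = Real.sqrt (∑ c, (U i c)^2) ^ 2 := (Real.sq_sqrt h0).symm
      _ ≤ Real.sqrt (μ * r / n₁) ^ 2 :=
          pow_le_pow_left₀ (Real.sqrt_nonneg _) (hUinc i) 2
      _ = μ * r / n₁ := Real.sq_sqrt hρ₁0
  have hVrow : ∀ j, ∑ c, (V j c)^2 ≤ μ * r / n₂ := by
    intro j
    have h0 : 0 ≤ ∑ c, (V j c)^2 := Finset.sum_nonneg fun c _ => sq_nonneg _
    calc ∑ c, (V j c)^2 = Real.sqrt (∑ c, (V j c)^2) ^ 2 := (Real.sq_sqrt h0).symm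
      _ ≤ Real.sqrt (μ * r / n₂) ^ 2 :=
          pow_le_pow_left₀ (Real.sqrt_nonneg _) (hVinc j) 2
      _ = μ * r / n₂ := Real.sq_sqrt hρ₂0
  have hd0 : (0 : ℝ) ≤ (d : ℝ) := Nat.cast_nonneg d
  have hs1 : Real.sqrt ((μ * r / n₁) * d) = Real.sqrt (μ * r * d / n₁) := by
    rw [show (μ * r / n₁) * (d : ℝ) = μ * r * d / n₁ by ring]
  have hs2 : Real.sqrt ((μ * r / n₂) * d) = Real.sqrt (μ * r * d / n₂) := by
    rw [show (μ * r / n₂) * (d : ℝ) = μ * r * d / n₂ by ring]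
  have hbound : ∀ i j, |projT U V W i j| ≤ alphaP μ r d n₁ n₂ * B := by
    intro i j
    have b1 : |(U * Uᵀ * W) i j| ≤ Real.sqrt (μ * r * d / n₁) * B := by
      rw [← hs1]
      exact term1_bound U hU W B (μ * r / n₁) d hB hρ₁0 hd0 hUrow hcolW i j
    have b2 : |(W * (V * Vᵀ)) i j| ≤ Real.sqrt (μ * r * d / n₂) * B := by
      have e : (W * (V * Vᵀ)) i j = (V * Vᵀ * Wᵀ) j i := by
        rw [show (W * (V * Vᵀ)) i j = ((W * (V * Vᵀ))ᵀ) j i from rfl,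
          Matrix.transpose_mul, Matrix.transpose_mul, Matrix.transpose_transpose]
      rw [e, ← hs2]
      exact term1_bound V hV Wᵀ B (μ * r / n₂) d hB hρ₂0 hd0 hVrow
        (fun j' => by simpa [Matrix.transpose_apply] using hrowW j') j i
    have b3 : |(U * Uᵀ * W * (V * Vᵀ)) i j| ≤
        Real.sqrt (μ * r * d / n₁) * Real.sqrt (μ * r * d / n₂) * B := by
      rw [← hs1, ← hs2]
      exact term3_bound U V hU hV W S B (μ * r / n₁) (μ * r / n₂) hB hρ₁0 hρ₂0
        habs hWz hrow hcol hUrow hVrow i j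
    have b3' : |(U * Uᵀ * W * (V * Vᵀ)) i j| ≤
        Real.sqrt (μ * r * d / ((max n₁ n₂ : ℕ) : ℝ)) * B :=
      b3.trans (mul_le_mul_of_nonneg_right hprod hB)
    have hsplit : projT U V W i j
        = (U * Uᵀ * W) i j + (W * (V * Vᵀ)) i j - (U * Uᵀ * W * (V * Vᵀ)) i j := by
      simp [projT, Matrix.sub_apply, Matrix.add_apply]
    rw [hsplit, alphaP]
    have h1 := abs_add_le ((U * Uᵀ * W) i j) ((W * (V * Vᵀ)) i j)
    have h2 := abs_sub ((U * Uᵀ * W) i j + (W * (V * Vᵀ)) i j)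
      ((U * Uᵀ * W * (V * Vᵀ)) i j)
    push_cast
    push_cast at b3'
    nlinarith [b1, b2, b3']
  have hα0 : 0 ≤ alphaP μ r d n₁ n₂ := by
    unfold alphaP
    positivity
  have hαB : 0 ≤ alphaP μ r d n₁ n₂ * B := mul_nonneg hα0 hB
  exact Real.iSup_le (fun i => Real.iSup_le (fun j => hbound i j) hαB) hαB


end
end

section
/- Let Γᶜ ⊆ [n₁]×[n₂] have at most d entries per row and column, and let T = {UXᵀ + YVᵀ : X ∈ ℝ^{n₂×r}, Y ∈ ℝ^{n₁×r}} where U, V are μ-incoherent orthonormal-column matrices. If α = √(μrd/n₁) + √(μrd/n₂) + √(μrd/max(n₁,n₂)) < 1 (and √(μrd/n₁), √(μrd/n₂) ≤ 1), then the only matrix supported on Γᶜ that lies in T is the zero matrix, i.e. {M : supp(M) ⊆ Γᶜ} ∩ T = {0}. -/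
open Matrix

noncomputable section

lemma cs_abs {ι : Type*} (s : Finset ι) (f : ι → ℝ) :
    (∑ i ∈ s, |f i|) ^ 2 ≤ s.card * ∑ i ∈ s, f i ^ 2 := by
  calc (∑ i ∈ s, |f i|)^2 = (∑ i ∈ s, 1 * |f i|)^2 := by simp
  _ ≤ (∑ i ∈ s, (1:ℝ)^2) * ∑ i ∈ s, |f i|^2 := Finset.sum_mul_sq_le_sq_mul_sq s _ _
  _ = s.card * ∑ i ∈ s, f i ^ 2 := by simp [sq_abs]

lemma proj_symm {n r : ℕ} (U : Matrix (Fin n) (Fin r) ℝ) (a b : Fin n) :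
    (U * Uᵀ) a b = (U * Uᵀ) b a := by
  simp [Matrix.mul_apply, Matrix.transpose_apply, mul_comm]

lemma proj_sq_row {n r : ℕ} (U : Matrix (Fin n) (Fin r) ℝ) (hU : Uᵀ * U = 1) (i : Fin n) :
    ∑ a, ((U * Uᵀ) i a)^2 = ∑ k, (U i k)^2 := by
  have hidem : (U*Uᵀ) * (U*Uᵀ) = U*Uᵀ := by
    rw [Matrix.mul_assoc, ← Matrix.mul_assoc Uᵀ, hU, Matrix.one_mul]
  have h1 : ∑ a, ((U*Uᵀ) i a)^2 = ((U*Uᵀ)*(U*Uᵀ)) i i := by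
    rw [Matrix.mul_apply]
    refine Finset.sum_congr rfl fun a _ => ?_
    rw [proj_symm U a i, sq]
  rw [h1, hidem, Matrix.mul_apply]
  simp [Matrix.transpose_apply, sq]

lemma proj_identity {n₁ n₂ r : ℕ} (U : Matrix (Fin n₁) (Fin r) ℝ) (V : Matrix (Fin n₂) (Fin r) ℝ)
    (hU : Uᵀ * U = 1) (hV : Vᵀ * V = 1)
    (X : Matrix (Fin n₂) (Fin r) ℝ) (Y : Matrix (Fin n₁) (Fin r) ℝ) :
    U * Uᵀ * (U * Xᵀ + Y * Vᵀ) + (U * Xᵀ + Y * Vᵀ) * (V * Vᵀ)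
      - U * Uᵀ * (U * Xᵀ + Y * Vᵀ) * (V * Vᵀ) = U * Xᵀ + Y * Vᵀ := by
  have hA : U * Uᵀ * (U * Xᵀ) = U * Xᵀ := by
    rw [Matrix.mul_assoc, ← Matrix.mul_assoc Uᵀ, hU, Matrix.one_mul]
  have hB : (Y * Vᵀ) * (V * Vᵀ) = Y * Vᵀ := by
    rw [Matrix.mul_assoc, ← Matrix.mul_assoc Vᵀ, hV, Matrix.one_mul]
  rw [Matrix.mul_add, Matrix.add_mul, hA, hB, Matrix.add_mul,
    Matrix.mul_assoc (U * Uᵀ) (Y * Vᵀ) (V * Vᵀ), hB]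
  abel

theorem stmt2 (n₁ n₂ r d : ℕ) (μ : ℝ) (hμ : 1 ≤ μ)
    (S : Set (Fin n₁ × Fin n₂))
    (hrow : ∀ i, rowCount S i ≤ d) (hcol : ∀ j, colCount S j ≤ d)
    (U : Matrix (Fin n₁) (Fin r) ℝ) (V : Matrix (Fin n₂) (Fin r) ℝ)
    (hU : Uᵀ * U = 1) (hV : Vᵀ * V = 1)
    (hUinc : ∀ i, Real.sqrt (∑ k, (U i k) ^ 2) ≤ Real.sqrt (μ * r / n₁))
    (hVinc : ∀ j, Real.sqrt (∑ k, (V j k) ^ 2) ≤ Real.sqrt (μ * r / n₂))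
    (h₁ : Real.sqrt (μ * r * d / n₁) ≤ 1) (h₂ : Real.sqrt (μ * r * d / n₂) ≤ 1)
    (hα : alphaP μ r d n₁ n₂ < 1) :
    ∀ M : Matrix (Fin n₁) (Fin n₂) ℝ,
      (∀ i j, (i, j) ∉ S → M i j = 0) →
      (∃ (X : Matrix (Fin n₂) (Fin r) ℝ) (Y : Matrix (Fin n₁) (Fin r) ℝ),
        M = U * Xᵀ + Y * Vᵀ) →
      M = 0 := by
  classical
  have hrow' : ∀ i, (Finset.univ.filter fun j => (i, j) ∈ S).card ≤ d := by
    intro i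
    have := hrow i
    rw [rowCount, Finset.filter_congr_decidable] at this
    exact this
  have hcol' : ∀ j, (Finset.univ.filter fun i => (i, j) ∈ S).card ≤ d := by
    intro j
    have := hcol j
    rw [colCount, Finset.filter_congr_decidable] at this
    exact this
  rw [alphaP] at hα
  clear hrow hcol
  classical
  intro M hsupp hex
  obtain ⟨X, Y, hMeq⟩ := hex
  rcases Nat.eq_zero_or_pos n₁ with h | hn₁pos
  · subst h; funext i j; exact i.elim0
  rcases Nat.eq_zero_or_pos n₂ with h | hn₂pos
  · subst h; funext i j; exact j.elim0
  have hμ0 : (0:ℝ) ≤ μ := le_trans zero_le_one hμ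
  have hc₁ : (0:ℝ) ≤ μ * r / n₁ := by positivity
  have hc₂ : (0:ℝ) ≤ μ * r / n₂ := by positivity
  have hUsum : ∀ i, ∑ k, (U i k)^2 ≤ μ * r / n₁ := fun i =>
    (Real.sqrt_le_sqrt_iff (by positivity)).mp (hUinc i)
  have hVsum : ∀ j, ∑ k, (V j k)^2 ≤ μ * r / n₂ := fun j =>
    (Real.sqrt_le_sqrt_iff (by positivity)).mp (hVinc j)
  have hPsum : ∀ i, ∑ a, ((U * Uᵀ) i a)^2 ≤ μ * r / n₁ := fun i => by
    rw [proj_sq_row U hU i]; exact hUsum i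
  have hQsum : ∀ j, ∑ b, ((V * Vᵀ) b j)^2 ≤ μ * r / n₂ := fun j => by
    have : ∑ b, ((V * Vᵀ) b j)^2 = ∑ b, ((V * Vᵀ) j b)^2 :=
      Finset.sum_congr rfl fun b _ => by rw [proj_symm]
    rw [this, proj_sq_row V hV j]; exact hVsum j
  -- max of |M|
  obtain ⟨p, -, hmax⟩ := Finset.exists_max_image (Finset.univ : Finset (Fin n₁ × Fin n₂))
    (fun q => |M q.1 q.2|) ⟨(⟨0, hn₁pos⟩, ⟨0, hn₂pos⟩), Finset.mem_univ _⟩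
  set K := |M p.1 p.2| with hKdef
  have hK : ∀ a b, |M a b| ≤ K := fun a b => hmax (a, b) (Finset.mem_univ _)
  have hK0 : 0 ≤ K := abs_nonneg _
  -- bound 1
  have B1 : ∀ i j, |(U * Uᵀ * M) i j| ≤ Real.sqrt (μ * r * d / n₁) * K := by
    intro i j
    rw [Matrix.mul_apply]
    set t := Finset.univ.filter (fun a : Fin n₁ => (a, j) ∈ S) with ht
    have hsum : ∑ a, (U*Uᵀ) i a * M a j = ∑ a ∈ t, (U*Uᵀ) i a * M a j := by
      symm
      apply Finset.sum_subset (Finset.subset_univ t)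
      intro a _ ha
      have hna : (a, j) ∉ S := by simpa [ht] using ha
      rw [hsupp a j hna, mul_zero]
    rw [hsum]
    calc |∑ a ∈ t, (U*Uᵀ) i a * M a j| ≤ ∑ a ∈ t, |(U*Uᵀ) i a * M a j| :=
          Finset.abs_sum_le_sum_abs _ _
    _ ≤ ∑ a ∈ t, |(U*Uᵀ) i a| * K := by
        refine Finset.sum_le_sum fun a _ => ?_
        rw [abs_mul]
        exact mul_le_mul_of_nonneg_left (hK a j) (abs_nonneg _)
    _ = (∑ a ∈ t, |(U*Uᵀ) i a|) * K := by rw [Finset.sum_mul]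
    _ ≤ Real.sqrt (μ * r * d / n₁) * K := by
        refine mul_le_mul_of_nonneg_right ?_ hK0
        rw [← Real.sqrt_sq (show (0:ℝ) ≤ ∑ a ∈ t, |(U*Uᵀ) i a| by positivity)]
        apply Real.sqrt_le_sqrt
        calc (∑ a ∈ t, |(U*Uᵀ) i a|)^2 ≤ t.card * ∑ a ∈ t, ((U*Uᵀ) i a)^2 := cs_abs t _
        _ ≤ (d : ℝ) * ∑ a, ((U*Uᵀ) i a)^2 := by
            apply mul_le_mul ?_ ?_ (by positivity) (Nat.cast_nonneg d)
            · exact_mod_cast hcol' j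
            · exact Finset.sum_le_sum_of_subset_of_nonneg (Finset.subset_univ t)
                fun a _ _ => sq_nonneg _
        _ ≤ (d : ℝ) * (μ * r / n₁) :=
            mul_le_mul_of_nonneg_left (hPsum i) (Nat.cast_nonneg d)
        _ = μ * r * d / n₁ := by ring
  -- bound 2
  have B2 : ∀ i j, |(M * (V * Vᵀ)) i j| ≤ Real.sqrt (μ * r * d / n₂) * K := by
    intro i j
    rw [Matrix.mul_apply]
    set t := Finset.univ.filter (fun b : Fin n₂ => (i, b) ∈ S) with ht
    have hsum : ∑ b, M i b * (V*Vᵀ) b j = ∑ b ∈ t, M i b * (V*Vᵀ) b j := by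
      symm
      apply Finset.sum_subset (Finset.subset_univ t)
      intro b _ hb
      have hnb : (i, b) ∉ S := by simpa [ht] using hb
      rw [hsupp i b hnb, zero_mul]
    rw [hsum]
    calc |∑ b ∈ t, M i b * (V*Vᵀ) b j| ≤ ∑ b ∈ t, |M i b * (V*Vᵀ) b j| :=
          Finset.abs_sum_le_sum_abs _ _
    _ ≤ ∑ b ∈ t, |(V*Vᵀ) b j| * K := by
        refine Finset.sum_le_sum fun b _ => ?_
        rw [abs_mul, mul_comm]
        exact mul_le_mul_of_nonneg_left (hK i b) (abs_nonneg _)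
    _ = (∑ b ∈ t, |(V*Vᵀ) b j|) * K := by rw [Finset.sum_mul]
    _ ≤ Real.sqrt (μ * r * d / n₂) * K := by
        refine mul_le_mul_of_nonneg_right ?_ hK0
        rw [← Real.sqrt_sq (show (0:ℝ) ≤ ∑ b ∈ t, |(V*Vᵀ) b j| by positivity)]
        apply Real.sqrt_le_sqrt
        calc (∑ b ∈ t, |(V*Vᵀ) b j|)^2 ≤ t.card * ∑ b ∈ t, ((V*Vᵀ) b j)^2 := cs_abs t _
        _ ≤ (d : ℝ) * ∑ b, ((V*Vᵀ) b j)^2 := by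
            apply mul_le_mul ?_ ?_ (by positivity) (Nat.cast_nonneg d)
            · exact_mod_cast hrow' i
            · exact Finset.sum_le_sum_of_subset_of_nonneg (Finset.subset_univ t)
                fun b _ _ => sq_nonneg _
        _ ≤ (d : ℝ) * (μ * r / n₂) :=
            mul_le_mul_of_nonneg_left (hQsum j) (Nat.cast_nonneg d)
        _ = μ * r * d / n₂ := by ring
  -- bound 3
  have B3 : ∀ i j, |(U * Uᵀ * M * (V * Vᵀ)) i j| ≤
      Real.sqrt (μ * r * d / n₁) * Real.sqrt (μ * r * d / n₂) * K := by
    intro i j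
    set s2 := Finset.univ.filter (fun q : Fin n₁ × Fin n₂ => q ∈ S) with hs2
    have hexp : (U * Uᵀ * M * (V * Vᵀ)) i j
        = ∑ q ∈ s2, (U*Uᵀ) i q.1 * M q.1 q.2 * (V*Vᵀ) q.2 j := by
      have h1 : ∑ q ∈ s2, (U*Uᵀ) i q.1 * M q.1 q.2 * (V*Vᵀ) q.2 j
          = ∑ q : Fin n₁ × Fin n₂, (U*Uᵀ) i q.1 * M q.1 q.2 * (V*Vᵀ) q.2 j :=
        Finset.sum_subset (Finset.subset_univ s2) (fun q _ hq => by
          have hnq : (q.1, q.2) ∉ S := by simpa [hs2] using hq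
          rw [hsupp q.1 q.2 hnq, mul_zero, zero_mul])
      rw [h1, Fintype.sum_prod_type]
      have h2 : ∀ b, (U*Uᵀ*M) i b = ∑ a, (U*Uᵀ) i a * M a b := fun b => Matrix.mul_apply
      rw [Matrix.mul_apply]
      simp only [h2, Finset.sum_mul]
      rw [Finset.sum_comm]
    rw [hexp]
    have key : (∑ q ∈ s2, |(U*Uᵀ) i q.1| * |(V*Vᵀ) q.2 j|) ≤
        Real.sqrt (μ * r * d / n₁) * Real.sqrt (μ * r * d / n₂) := by
      rw [← Real.sqrt_mul (by positivity) (μ * r * d / n₂)]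
      rw [← Real.sqrt_sq (show (0:ℝ) ≤ ∑ q ∈ s2, |(U*Uᵀ) i q.1| * |(V*Vᵀ) q.2 j| by positivity)]
      apply Real.sqrt_le_sqrt
      have cs := Finset.sum_mul_sq_le_sq_mul_sq s2 (fun q => |(U*Uᵀ) i q.1|)
        (fun q => |(V*Vᵀ) q.2 j|)
      simp only [sq_abs] at cs
      refine le_trans cs ?_
      have hA : ∑ q ∈ s2, ((U*Uᵀ) i q.1)^2 ≤ μ * r * d / n₁ := by
        have : ∑ q ∈ s2, ((U*Uᵀ) i q.1)^2
            = ∑ a, (((Finset.univ.filter fun b => (a, b) ∈ S)).card : ℝ) * ((U*Uᵀ) i a)^2 := by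
          rw [hs2, Finset.sum_filter, Fintype.sum_prod_type]
          refine Finset.sum_congr rfl fun a _ => ?_
          rw [← Finset.sum_filter]
          simp [Finset.sum_const, nsmul_eq_mul]
        rw [this]
        calc ∑ a, (((Finset.univ.filter fun b => (a, b) ∈ S)).card : ℝ) * ((U*Uᵀ) i a)^2
            ≤ ∑ a, (d : ℝ) * ((U*Uᵀ) i a)^2 := by
              refine Finset.sum_le_sum fun a _ => ?_
              exact mul_le_mul_of_nonneg_right (by exact_mod_cast hrow' a) (sq_nonneg _)
        _ = (d : ℝ) * ∑ a, ((U*Uᵀ) i a)^2 := by rw [Finset.mul_sum]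
        _ ≤ (d : ℝ) * (μ * r / n₁) := mul_le_mul_of_nonneg_left (hPsum i) (Nat.cast_nonneg d)
        _ = μ * r * d / n₁ := by ring
      have hB : ∑ q ∈ s2, ((V*Vᵀ) q.2 j)^2 ≤ μ * r * d / n₂ := by
        have : ∑ q ∈ s2, ((V*Vᵀ) q.2 j)^2
            = ∑ b, (((Finset.univ.filter fun a => (a, b) ∈ S)).card : ℝ) * ((V*Vᵀ) b j)^2 := by
          rw [hs2, Finset.sum_filter, Fintype.sum_prod_type_right]
          refine Finset.sum_congr rfl fun b _ => ?_
          rw [← Finset.sum_filter]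
          simp [Finset.sum_const, nsmul_eq_mul]
        rw [this]
        calc ∑ b, (((Finset.univ.filter fun a => (a, b) ∈ S)).card : ℝ) * ((V*Vᵀ) b j)^2
            ≤ ∑ b, (d : ℝ) * ((V*Vᵀ) b j)^2 := by
              refine Finset.sum_le_sum fun b _ => ?_
              exact mul_le_mul_of_nonneg_right (by exact_mod_cast hcol' b) (sq_nonneg _)
        _ = (d : ℝ) * ∑ b, ((V*Vᵀ) b j)^2 := by rw [Finset.mul_sum]
        _ ≤ (d : ℝ) * (μ * r / n₂) := mul_le_mul_of_nonneg_left (hQsum j) (Nat.cast_nonneg d)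
        _ = μ * r * d / n₂ := by ring
      exact mul_le_mul hA hB (by positivity) (by positivity)
    calc |∑ q ∈ s2, (U*Uᵀ) i q.1 * M q.1 q.2 * (V*Vᵀ) q.2 j|
        ≤ ∑ q ∈ s2, |(U*Uᵀ) i q.1 * M q.1 q.2 * (V*Vᵀ) q.2 j| :=
          Finset.abs_sum_le_sum_abs _ _
    _ ≤ ∑ q ∈ s2, |(U*Uᵀ) i q.1| * |(V*Vᵀ) q.2 j| * K := by
        refine Finset.sum_le_sum fun q _ => ?_
        rw [abs_mul, abs_mul]
        calc |(U*Uᵀ) i q.1| * |M q.1 q.2| * |(V*Vᵀ) q.2 j|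
            ≤ |(U*Uᵀ) i q.1| * K * |(V*Vᵀ) q.2 j| := by
              apply mul_le_mul_of_nonneg_right _ (abs_nonneg _)
              exact mul_le_mul_of_nonneg_left (hK q.1 q.2) (abs_nonneg _)
        _ = |(U*Uᵀ) i q.1| * |(V*Vᵀ) q.2 j| * K := by ring
    _ = (∑ q ∈ s2, |(U*Uᵀ) i q.1| * |(V*Vᵀ) q.2 j|) * K := by rw [Finset.sum_mul]
    _ ≤ Real.sqrt (μ * r * d / n₁) * Real.sqrt (μ * r * d / n₂) * K :=
        mul_le_mul_of_nonneg_right key hK0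
  -- third factor bound
  have hthird : Real.sqrt (μ * r * d / n₁) * Real.sqrt (μ * r * d / n₂)
      ≤ Real.sqrt (μ * r * d / (max n₁ n₂ : ℕ)) := by
    rcases le_total n₁ n₂ with h | h
    · rw [Nat.cast_max, max_eq_right (by exact_mod_cast h : (n₁:ℝ) ≤ n₂)]
      calc Real.sqrt (μ * r * d / n₁) * Real.sqrt (μ * r * d / n₂)
          ≤ 1 * Real.sqrt (μ * r * d / n₂) :=
            mul_le_mul_of_nonneg_right h₁ (Real.sqrt_nonneg _)
      _ = Real.sqrt (μ * r * d / n₂) := one_mul _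
    · rw [Nat.cast_max, max_eq_left (by exact_mod_cast h : (n₂:ℝ) ≤ n₁)]
      calc Real.sqrt (μ * r * d / n₁) * Real.sqrt (μ * r * d / n₂)
          ≤ Real.sqrt (μ * r * d / n₁) * 1 :=
            mul_le_mul_of_nonneg_left h₂ (Real.sqrt_nonneg _)
      _ = Real.sqrt (μ * r * d / n₁) := mul_one _
  -- combine
  have hMid : M p.1 p.2 = (U * Uᵀ * M) p.1 p.2 + (M * (V * Vᵀ)) p.1 p.2
      - (U * Uᵀ * M * (V * Vᵀ)) p.1 p.2 := by
    have hid : U * Uᵀ * M + M * (V * Vᵀ) - U * Uᵀ * M * (V * Vᵀ) = M := by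
      rw [hMeq]; exact proj_identity U V hU hV X Y
    conv_lhs => rw [← hid]
    simp [Matrix.sub_apply, Matrix.add_apply]
  have hfinal : K ≤ (Real.sqrt (μ * r * d / n₁) + Real.sqrt (μ * r * d / n₂) +
      Real.sqrt (μ * r * d / (max n₁ n₂ : ℕ))) * K := by
    have h3 : |(U * Uᵀ * M * (V * Vᵀ)) p.1 p.2| ≤
        Real.sqrt (μ * r * d / (max n₁ n₂ : ℕ)) * K :=
      le_trans (B3 p.1 p.2) (mul_le_mul_of_nonneg_right hthird hK0)
    have habs : K ≤ |(U * Uᵀ * M) p.1 p.2| + |(M * (V * Vᵀ)) p.1 p.2|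
        + |(U * Uᵀ * M * (V * Vᵀ)) p.1 p.2| := by
      rw [hKdef, hMid]
      calc |(U * Uᵀ * M) p.1 p.2 + (M * (V * Vᵀ)) p.1 p.2
          - (U * Uᵀ * M * (V * Vᵀ)) p.1 p.2|
          ≤ |(U * Uᵀ * M) p.1 p.2 + (M * (V * Vᵀ)) p.1 p.2|
            + |(U * Uᵀ * M * (V * Vᵀ)) p.1 p.2| := abs_sub _ _
      _ ≤ |(U * Uᵀ * M) p.1 p.2| + |(M * (V * Vᵀ)) p.1 p.2|
            + |(U * Uᵀ * M * (V * Vᵀ)) p.1 p.2| := by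
          have := abs_add_le ((U * Uᵀ * M) p.1 p.2) ((M * (V * Vᵀ)) p.1 p.2)
          linarith
    have := B1 p.1 p.2
    have := B2 p.1 p.2
    rw [add_mul, add_mul]
    linarith
  have hKzero : K = 0 := by
    by_contra h
    have hKpos : 0 < K := lt_of_le_of_ne hK0 (Ne.symm h)
    have := mul_lt_mul_of_pos_right hα hKpos
    rw [one_mul] at this
    linarith
  funext i j
  have : |M i j| ≤ 0 := hKzero ▸ hK i j
  have : M i j = 0 := abs_eq_zero.mp (le_antisymm this (abs_nonneg _))
  simpa using this


end
end

section
/- Let Γ_dᶜ ⊆ [n₁]×[n₂] have at most d entries per row and column, and let Z ∈ T = {UXᵀ + U⊥YVᵀ : X, Y}, where U ∈ ℝ^{n₁×r}, V ∈ ℝ^{n₂×r} are μ-incoherent with orthonormal columns. Then ‖P_{Γ_dᶜ}(Z)‖_F ≤ α ‖Z‖_F, where α = √(μrd/n₁) + √(μrd/n₂) + √(μrd/max(n₁,n₂)). -/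
open Matrix

noncomputable section

private lemma sqrt_le_of_incoh {c : ℝ} (hc : 0 ≤ c) {s : ℝ} (hs : 0 ≤ s)
    (h : Real.sqrt s ≤ Real.sqrt c) : s ≤ c := by
  calc s = Real.sqrt s ^ 2 := (Real.sq_sqrt hs).symm
    _ ≤ Real.sqrt c ^ 2 := by
        apply pow_le_pow_left₀ (Real.sqrt_nonneg _) h
    _ = c := Real.sq_sqrt hc

private lemma frob_triangle {a b : ℕ} (A B : Matrix (Fin a) (Fin b) ℝ) :
    frobNorm (A + B) ≤ frobNorm A + frobNorm B := by
  unfold frobNorm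
  have h2 : ∀ (M : Matrix (Fin a) (Fin b) ℝ), ∑ i, ∑ j, (M i j)^2
      = ∑ p : Fin a × Fin b, (M p.1 p.2)^2 := fun M => (Fintype.sum_prod_type (fun p : Fin a × Fin b => M p.1 p.2 ^ 2)).symm
  rw [h2, h2, h2]
  set f : Fin a × Fin b → ℝ := fun p => A p.1 p.2 with hf
  set g : Fin a × Fin b → ℝ := fun p => B p.1 p.2 with hg
  have hcs := Real.sum_mul_le_sqrt_mul_sqrt Finset.univ f g
  have ha : (0:ℝ) ≤ ∑ p, f p ^ 2 := by positivity
  have hb : (0:ℝ) ≤ ∑ p, g p ^ 2 := by positivity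
  have expand : ∑ p : Fin a × Fin b, ((A + B) p.1 p.2)^2
      = ∑ p, f p ^ 2 + 2 * ∑ p, f p * g p + ∑ p, g p ^ 2 := by
    simp only [Matrix.add_apply, hf, hg, add_sq, Finset.sum_add_distrib, Finset.mul_sum]
    ring_nf
  rw [expand]
  have key : ∑ p, f p ^ 2 + 2 * ∑ p, f p * g p + ∑ p, g p ^ 2
      ≤ (Real.sqrt (∑ p, f p ^ 2) + Real.sqrt (∑ p, g p ^ 2))^2 := by
    nlinarith [Real.sq_sqrt ha, Real.sq_sqrt hb, hcs, Real.sqrt_nonneg (∑ p, f p ^ 2),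
      Real.sqrt_nonneg (∑ p, g p ^ 2)]
  calc Real.sqrt (∑ p, f p ^ 2 + 2 * ∑ p, f p * g p + ∑ p, g p ^ 2)
      ≤ Real.sqrt ((Real.sqrt (∑ p, f p ^ 2) + Real.sqrt (∑ p, g p ^ 2))^2) :=
        Real.sqrt_le_sqrt key
    _ = Real.sqrt (∑ p, f p ^ 2) + Real.sqrt (∑ p, g p ^ 2) :=
        Real.sqrt_sq (by positivity)

open Classical in
/-- Column-count version of the key bound. -/
private lemma key_col {a b r : ℕ} (S : Set (Fin a × Fin b)) (d : ℕ) (c : ℝ) (hc : 0 ≤ c)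
    (hcolS : ∀ j, colCount S j ≤ d)
    (P : Fin a → Fin r → ℝ) (Q : Fin b → Fin r → ℝ)
    (hP : ∀ i, ∑ k, (P i k)^2 ≤ c) :
    ∑ i, ∑ j, (projSet S (Matrix.of fun i j => ∑ k, P i k * Q j k) i j)^2
      ≤ (c * d) * ∑ j, ∑ k, (Q j k)^2 := by
  simp only [projSet, Matrix.of_apply]
  rw [Finset.sum_comm]
  have step1 : ∀ j : Fin b, ∑ i, (if (i, j) ∈ S then (∑ k, P i k * Q j k) else 0)^2
      ≤ (colCount S j : ℝ) * (c * ∑ k, (Q j k)^2) := by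
    intro j
    have hij : ∀ i : Fin a, (if (i, j) ∈ S then (∑ k, P i k * Q j k) else 0)^2
        ≤ (if (i, j) ∈ S then c * ∑ k, (Q j k)^2 else 0) := by
      intro i
      split
      · calc (∑ k, P i k * Q j k)^2 ≤ (∑ k, (P i k)^2) * ∑ k, (Q j k)^2 :=
            Finset.sum_mul_sq_le_sq_mul_sq _ _ _
          _ ≤ c * ∑ k, (Q j k)^2 :=
            mul_le_mul_of_nonneg_right (hP i) (by positivity)
      · simp
    calc ∑ i, (if (i, j) ∈ S then (∑ k, P i k * Q j k) else 0)^2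
        ≤ ∑ i, (if (i, j) ∈ S then c * ∑ k, (Q j k)^2 else 0) :=
          Finset.sum_le_sum fun i _ => hij i
      _ = (colCount S j : ℝ) * (c * ∑ k, (Q j k)^2) := by
          rw [← Finset.sum_filter, Finset.sum_const, nsmul_eq_mul, colCount]
  calc ∑ j, ∑ i, (if (i, j) ∈ S then (∑ k, P i k * Q j k) else 0)^2
      ≤ ∑ j, (colCount S j : ℝ) * (c * ∑ k, (Q j k)^2) :=
        Finset.sum_le_sum fun j _ => step1 j
    _ ≤ ∑ j, (d : ℝ) * (c * ∑ k, (Q j k)^2) := by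
        refine Finset.sum_le_sum fun j _ => ?_
        have : (colCount S j : ℝ) ≤ (d : ℝ) := by exact_mod_cast hcolS j
        exact mul_le_mul_of_nonneg_right this (by positivity)
    _ = (c * d) * ∑ j, ∑ k, (Q j k)^2 := by
        simp only [← Finset.mul_sum]; ring

open Classical in
/-- Row-count version of the key bound. -/
private lemma key_row {a b r : ℕ} (S : Set (Fin a × Fin b)) (d : ℕ) (c : ℝ) (hc : 0 ≤ c)
    (hrowS : ∀ i, rowCount S i ≤ d)
    (P : Fin a → Fin r → ℝ) (Q : Fin b → Fin r → ℝ)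
    (hQ : ∀ j, ∑ k, (Q j k)^2 ≤ c) :
    ∑ i, ∑ j, (projSet S (Matrix.of fun i j => ∑ k, P i k * Q j k) i j)^2
      ≤ (c * d) * ∑ i, ∑ k, (P i k)^2 := by
  simp only [projSet, Matrix.of_apply]
  have step1 : ∀ i : Fin a, ∑ j, (if (i, j) ∈ S then (∑ k, P i k * Q j k) else 0)^2
      ≤ (rowCount S i : ℝ) * (c * ∑ k, (P i k)^2) := by
    intro i
    have hij : ∀ j : Fin b, (if (i, j) ∈ S then (∑ k, P i k * Q j k) else 0)^2
        ≤ (if (i, j) ∈ S then c * ∑ k, (P i k)^2 else 0) := by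
      intro j
      split
      · calc (∑ k, P i k * Q j k)^2 ≤ (∑ k, (P i k)^2) * ∑ k, (Q j k)^2 :=
            Finset.sum_mul_sq_le_sq_mul_sq _ _ _
          _ ≤ c * ∑ k, (P i k)^2 := by
            have h1 : (∑ k, (P i k)^2) * (∑ k, (Q j k)^2) ≤ (∑ k, (P i k)^2) * c :=
              mul_le_mul_of_nonneg_left (hQ j) (by positivity)
            linarith [h1]
      · simp
    calc ∑ j, (if (i, j) ∈ S then (∑ k, P i k * Q j k) else 0)^2
        ≤ ∑ j, (if (i, j) ∈ S then c * ∑ k, (P i k)^2 else 0) :=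
          Finset.sum_le_sum fun j _ => hij j
      _ = (rowCount S i : ℝ) * (c * ∑ k, (P i k)^2) := by
          rw [← Finset.sum_filter, Finset.sum_const, nsmul_eq_mul, rowCount]
  calc ∑ i, ∑ j, (if (i, j) ∈ S then (∑ k, P i k * Q j k) else 0)^2
      ≤ ∑ i, (rowCount S i : ℝ) * (c * ∑ k, (P i k)^2) :=
        Finset.sum_le_sum fun i _ => step1 i
    _ ≤ ∑ i, (d : ℝ) * (c * ∑ k, (P i k)^2) := by
        refine Finset.sum_le_sum fun i _ => ?_
        have : (rowCount S i : ℝ) ≤ (d : ℝ) := by exact_mod_cast hrowS i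
        exact mul_le_mul_of_nonneg_right this (by positivity)
    _ = (c * d) * ∑ i, ∑ k, (P i k)^2 := by
        simp only [← Finset.mul_sum]; ring

private lemma sum_sq_eq_trace {a b : ℕ} (M : Matrix (Fin a) (Fin b) ℝ) :
    ∑ i, ∑ j, (M i j)^2 = Matrix.trace (Mᵀ * M) := by
  simp only [Matrix.trace, Matrix.diag, Matrix.mul_apply, Matrix.transpose_apply, sq]
  rw [Finset.sum_comm]

theorem stmt6 (n₁ n₂ r m d : ℕ) (μ : ℝ) (hμ : 1 ≤ μ)
    (S : Set (Fin n₁ × Fin n₂))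
    (hrow : ∀ i, rowCount S i ≤ d) (hcol : ∀ j, colCount S j ≤ d)
    (U : Matrix (Fin n₁) (Fin r) ℝ) (V : Matrix (Fin n₂) (Fin r) ℝ)
    (Uperp : Matrix (Fin n₁) (Fin m) ℝ)
    (hU : Uᵀ * U = 1) (hV : Vᵀ * V = 1) (hUp : Uperpᵀ * Uperp = 1)
    (hUUp : Uᵀ * Uperp = 0)
    (hUinc : ∀ i, Real.sqrt (∑ k, (U i k) ^ 2) ≤ Real.sqrt (μ * r / n₁))
    (hVinc : ∀ j, Real.sqrt (∑ k, (V j k) ^ 2) ≤ Real.sqrt (μ * r / n₂)) :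
    ∀ (Z : Matrix (Fin n₁) (Fin n₂) ℝ),
      (∃ (X : Matrix (Fin n₂) (Fin r) ℝ) (Y : Matrix (Fin m) (Fin r) ℝ),
        Z = U * Xᵀ + Uperp * Y * Vᵀ) →
      frobNorm (projSet S Z) ≤ alphaP μ r d n₁ n₂ * frobNorm Z := by
  rintro Z ⟨X, Y, rfl⟩
  classical
  set W : Matrix (Fin n₁) (Fin r) ℝ := Uperp * Y with hW
  have hμ0 : (0:ℝ) ≤ μ := le_trans zero_le_one hμ
  have hc1 : (0:ℝ) ≤ μ * r / n₁ := by positivity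
  have hc2 : (0:ℝ) ≤ μ * r / n₂ := by positivity
  have hAof : U * Xᵀ = Matrix.of (fun i j => ∑ k, U i k * X j k) := by
    funext i j; simp [Matrix.mul_apply]
  have hBof : Uperp * Y * Vᵀ = Matrix.of (fun i j => ∑ k, W i k * V j k) := by
    funext i j; simp [Matrix.mul_apply, hW]
  have hUsum : ∀ i, ∑ k, (U i k)^2 ≤ μ * r / n₁ := fun i =>
    sqrt_le_of_incoh hc1 (by positivity) (hUinc i)
  have hVsum : ∀ j, ∑ k, (V j k)^2 ≤ μ * r / n₂ := fun j =>
    sqrt_le_of_incoh hc2 (by positivity) (hVinc j)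
  have hPA := key_col S d (μ * r / n₁) hc1 hcol (fun i k => U i k) (fun j k => X j k) hUsum
  have hPB := key_row S d (μ * r / n₂) hc2 hrow (fun i k => W i k) (fun j k => V j k) hVsum
  -- helper rewrites for orthogonality
  have hU' : ∀ {p : ℕ} (M : Matrix (Fin r) (Fin p) ℝ), Uᵀ * (U * M) = M := by
    intro p M; rw [← Matrix.mul_assoc, hU, Matrix.one_mul]
  have hUp' : ∀ {p : ℕ} (M : Matrix (Fin m) (Fin p) ℝ), Uperpᵀ * (Uperp * M) = M := by
    intro p M; rw [← Matrix.mul_assoc, hUp, Matrix.one_mul]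
  have hUUp' : ∀ {p : ℕ} (M : Matrix (Fin m) (Fin p) ℝ), Uᵀ * (Uperp * M) = 0 := by
    intro p M; rw [← Matrix.mul_assoc, hUUp, Matrix.zero_mul]
  have hpU : Uperpᵀ * U = 0 := by
    have := congrArg Matrix.transpose hUUp
    simpa [Matrix.transpose_mul] using this
  have hpU' : ∀ {p : ℕ} (M : Matrix (Fin r) (Fin p) ℝ), Uperpᵀ * (U * M) = 0 := by
    intro p M; rw [← Matrix.mul_assoc, hpU, Matrix.zero_mul]
  -- W has same Frobenius mass as Y
  have hWsum : ∑ i, ∑ k, (W i k)^2 = ∑ i, ∑ k, (Y i k)^2 := by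
    rw [sum_sq_eq_trace, sum_sq_eq_trace, hW]
    rw [show (Uperp * Y)ᵀ * (Uperp * Y) = Yᵀ * Y by
      simp only [Matrix.transpose_mul, Matrix.mul_assoc, hUp']]
  -- Frobenius mass of Z
  have hZsq : ∑ i, ∑ j, ((U * Xᵀ + Uperp * Y * Vᵀ) i j)^2
      = (∑ j, ∑ k, (X j k)^2) + (∑ i, ∑ k, (Y i k)^2) := by
    rw [sum_sq_eq_trace, sum_sq_eq_trace, sum_sq_eq_trace]
    have expand : (U * Xᵀ + Uperp * Y * Vᵀ)ᵀ * (U * Xᵀ + Uperp * Y * Vᵀ)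
        = ((U * Xᵀ)ᵀ * (U * Xᵀ) + (U * Xᵀ)ᵀ * (Uperp * Y * Vᵀ))
          + ((Uperp * Y * Vᵀ)ᵀ * (U * Xᵀ) + (Uperp * Y * Vᵀ)ᵀ * (Uperp * Y * Vᵀ)) := by
      rw [Matrix.transpose_add, Matrix.add_mul, Matrix.mul_add, Matrix.mul_add]
    have e1 : (U * Xᵀ)ᵀ * (U * Xᵀ) = X * Xᵀ := by
      simp only [Matrix.transpose_mul, Matrix.transpose_transpose, Matrix.mul_assoc, hU']
    have e2 : (U * Xᵀ)ᵀ * (Uperp * Y * Vᵀ) = 0 := by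
      simp only [Matrix.transpose_mul, Matrix.transpose_transpose, Matrix.mul_assoc, hUUp',
        Matrix.mul_zero]
    have e3 : (Uperp * Y * Vᵀ)ᵀ * (U * Xᵀ) = 0 := by
      simp only [Matrix.transpose_mul, Matrix.transpose_transpose, Matrix.mul_assoc, hpU',
        Matrix.mul_zero]
    have e4 : (Uperp * Y * Vᵀ)ᵀ * (Uperp * Y * Vᵀ) = V * (Yᵀ * (Y * Vᵀ)) := by
      simp only [Matrix.transpose_mul, Matrix.transpose_transpose, Matrix.mul_assoc, hUp']
    rw [expand, Matrix.trace_add, Matrix.trace_add, Matrix.trace_add, e1, e2, e3, e4]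
    have t1 : Matrix.trace (X * Xᵀ) = Matrix.trace (Xᵀ * X) := Matrix.trace_mul_comm _ _
    have t2 : Matrix.trace (V * (Yᵀ * (Y * Vᵀ))) = Matrix.trace (Yᵀ * Y) := by
      rw [Matrix.trace_mul_comm]
      rw [show Yᵀ * (Y * Vᵀ) * V = Yᵀ * Y by
        rw [Matrix.mul_assoc, Matrix.mul_assoc, hV, Matrix.mul_one]]
    rw [t1, t2]
    simp
  -- split the projection
  have hsplit : projSet S (U * Xᵀ + Uperp * Y * Vᵀ)
      = projSet S (U * Xᵀ) + projSet S (Uperp * Y * Vᵀ) := by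
    funext i j
    simp only [projSet, Matrix.of_apply, Matrix.add_apply]
    split <;> simp
  have hF0 : (0:ℝ) ≤ frobNorm (U * Xᵀ + Uperp * Y * Vᵀ) := Real.sqrt_nonneg _
  have hXle : Real.sqrt (∑ j, ∑ k, (X j k)^2) ≤ frobNorm (U * Xᵀ + Uperp * Y * Vᵀ) := by
    unfold frobNorm
    apply Real.sqrt_le_sqrt
    rw [hZsq]
    have : (0:ℝ) ≤ ∑ i, ∑ k, (Y i k)^2 := by positivity
    linarith
  have hYle : Real.sqrt (∑ i, ∑ k, (Y i k)^2) ≤ frobNorm (U * Xᵀ + Uperp * Y * Vᵀ) := by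
    unfold frobNorm
    apply Real.sqrt_le_sqrt
    rw [hZsq]
    have : (0:ℝ) ≤ ∑ j, ∑ k, (X j k)^2 := by positivity
    linarith
  have h1 : frobNorm (projSet S (U * Xᵀ))
      ≤ Real.sqrt (μ * r * d / n₁) * frobNorm (U * Xᵀ + Uperp * Y * Vᵀ) := by
    calc frobNorm (projSet S (U * Xᵀ))
        ≤ Real.sqrt ((μ * r / n₁ * d) * ∑ j, ∑ k, (X j k)^2) := by
          unfold frobNorm
          apply Real.sqrt_le_sqrt
          rw [hAof]
          exact hPA
      _ = Real.sqrt (μ * r * d / n₁) * Real.sqrt (∑ j, ∑ k, (X j k)^2) := by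
          rw [Real.sqrt_mul (by positivity)]
          rw [show μ * (r:ℝ) / n₁ * d = μ * r * d / n₁ from by ring]
      _ ≤ Real.sqrt (μ * r * d / n₁) * frobNorm (U * Xᵀ + Uperp * Y * Vᵀ) :=
          mul_le_mul_of_nonneg_left hXle (Real.sqrt_nonneg _)
  have h2 : frobNorm (projSet S (Uperp * Y * Vᵀ))
      ≤ Real.sqrt (μ * r * d / n₂) * frobNorm (U * Xᵀ + Uperp * Y * Vᵀ) := by
    calc frobNorm (projSet S (Uperp * Y * Vᵀ))
        ≤ Real.sqrt ((μ * r / n₂ * d) * ∑ i, ∑ k, (Y i k)^2) := by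
          unfold frobNorm
          apply Real.sqrt_le_sqrt
          rw [hBof, ← hWsum]
          exact hPB
      _ = Real.sqrt (μ * r * d / n₂) * Real.sqrt (∑ i, ∑ k, (Y i k)^2) := by
          rw [Real.sqrt_mul (by positivity)]
          rw [show μ * (r:ℝ) / n₂ * d = μ * r * d / n₂ from by ring]
      _ ≤ Real.sqrt (μ * r * d / n₂) * frobNorm (U * Xᵀ + Uperp * Y * Vᵀ) :=
          mul_le_mul_of_nonneg_left hYle (Real.sqrt_nonneg _)
  have h3 : (0:ℝ) ≤ Real.sqrt (μ * r * d / (max n₁ n₂ : ℕ))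
      * frobNorm (U * Xᵀ + Uperp * Y * Vᵀ) :=
    mul_nonneg (Real.sqrt_nonneg _) hF0
  calc frobNorm (projSet S (U * Xᵀ + Uperp * Y * Vᵀ))
      ≤ frobNorm (projSet S (U * Xᵀ)) + frobNorm (projSet S (Uperp * Y * Vᵀ)) := by
        rw [hsplit]; exact frob_triangle _ _
    _ ≤ alphaP μ r d n₁ n₂ * frobNorm (U * Xᵀ + Uperp * Y * Vᵀ) := by
        unfold alphaP
        rw [add_mul, add_mul]
        linarith

end
end

section
/- Let P_T be the orthogonal projection onto the subspace T of ℝ^{n×n}, and let Γ_d satisfy ‖P_{Γ_dᶜ}(Z)‖_F ≤ α‖Z‖_F for all Z ∈ T with α < 1. Then ‖P_T P_{Γ_d} P_T − P_T‖ ≤ α, where the operator norm is with respect to the Frobenius inner product on ℝ^{n×n}. -/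
open Matrix

noncomputable section

lemma finner_self_nonneg {m n : ℕ} (A : Matrix (Fin m) (Fin n) ℝ) : 0 ≤ finner A A := by
  apply Finset.sum_nonneg; intro i _; apply Finset.sum_nonneg; intro j _; exact mul_self_nonneg _

lemma frobNorm_eq_sqrt_finner {m n : ℕ} (A : Matrix (Fin m) (Fin n) ℝ) :
    frobNorm A = Real.sqrt (finner A A) := by
  unfold frobNorm finner; congr 1; congr 1; funext i; congr 1; funext j; ring

lemma frobNorm_nonneg {m n : ℕ} (A : Matrix (Fin m) (Fin n) ℝ) : 0 ≤ frobNorm A :=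
  Real.sqrt_nonneg _

lemma frobNorm_sq {m n : ℕ} (A : Matrix (Fin m) (Fin n) ℝ) :
    frobNorm A ^ 2 = finner A A := by
  rw [frobNorm_eq_sqrt_finner, Real.sq_sqrt (finner_self_nonneg A)]

lemma finner_le_frob {m n : ℕ} (A B : Matrix (Fin m) (Fin n) ℝ) :
    finner A B ≤ frobNorm A * frobNorm B := by
  unfold finner frobNorm
  have h := Real.sum_mul_le_sqrt_mul_sqrt (Finset.univ : Finset (Fin m × Fin n))
    (fun p => A p.1 p.2) (fun p => B p.1 p.2)
  simpa [Fintype.sum_prod_type] using h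

lemma pt_contract {n : ℕ}
    (PT : Matrix (Fin n) (Fin n) ℝ →ₗ[ℝ] Matrix (Fin n) (Fin n) ℝ)
    (hidem : PT ∘ₗ PT = PT)
    (hsa : ∀ A B, finner (PT A) B = finner A (PT B))
    (W : Matrix (Fin n) (Fin n) ℝ) : frobNorm (PT W) ≤ frobNorm W := by
  have hPP : PT (PT W) = PT W := by
    have := congrArg (fun f => f W) hidem; simpa using this
  have h1 : frobNorm (PT W) ^ 2 ≤ frobNorm W * frobNorm (PT W) := by
    calc frobNorm (PT W) ^ 2 = finner (PT W) (PT W) := frobNorm_sq _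
      _ = finner W (PT (PT W)) := hsa W (PT W)
      _ = finner W (PT W) := by rw [hPP]
      _ ≤ frobNorm W * frobNorm (PT W) := finner_le_frob _ _
  rcases eq_or_lt_of_le (frobNorm_nonneg (PT W)) with h | h
  · rw [← h]; exact frobNorm_nonneg _
  · nlinarith [h1]

lemma frobNorm_neg {m n : ℕ} (A : Matrix (Fin m) (Fin n) ℝ) :
    frobNorm (-A) = frobNorm A := by
  unfold frobNorm; congr 1; apply Finset.sum_congr rfl; intro i _
  apply Finset.sum_congr rfl; intro j _; simp [neg_pow]

lemma projSet_add_compl {m n : ℕ} (S : Set (Fin m × Fin n)) (A : Matrix (Fin m) (Fin n) ℝ) :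
    projSet S A + projSet Sᶜ A = A := by
  funext i j
  simp only [projSet, Matrix.add_apply, Matrix.of_apply, Set.mem_compl_iff]
  by_cases h : (i, j) ∈ S <;> simp [h]

theorem stmt7 (n : ℕ) (α : ℝ) (hα0 : 0 ≤ α) (hα : α < 1)
    (PT : Matrix (Fin n) (Fin n) ℝ →ₗ[ℝ] Matrix (Fin n) (Fin n) ℝ)
    (hidem : PT ∘ₗ PT = PT)
    (hsa : ∀ A B, finner (PT A) B = finner A (PT B))
    (S : Set (Fin n × Fin n))
    (hcontr : ∀ Z, PT Z = Z → frobNorm (projSet Sᶜ Z) ≤ α * frobNorm Z) :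
    opNormF (PT ∘ₗ projSetL S ∘ₗ PT - PT) ≤ α := by
  apply csInf_le
  · exact ⟨0, fun c hc => hc.1⟩
  refine ⟨hα0, fun Z => ?_⟩
  have hPP : ∀ W, PT (PT W) = PT W := fun W => by
    have := congrArg (fun f => f W) hidem; simpa using this
  have key : (PT ∘ₗ projSetL S ∘ₗ PT - PT) Z = -(PT (projSet Sᶜ (PT Z))) := by
    simp only [LinearMap.sub_apply, LinearMap.comp_apply]
    have : PT Z = PT (projSet S (PT Z)) + PT (projSet Sᶜ (PT Z)) := by
      conv_lhs => rw [← hPP Z, ← projSet_add_compl S (PT Z)]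
      rw [map_add]
    rw [show projSetL S (PT Z) = projSet S (PT Z) from rfl]
    nth_rewrite 2 [this]
    abel
  rw [key, frobNorm_neg]
  calc frobNorm (PT (projSet Sᶜ (PT Z))) ≤ frobNorm (projSet Sᶜ (PT Z)) :=
        pt_contract PT hidem hsa _
    _ ≤ α * frobNorm (PT Z) := hcontr (PT Z) (hPP Z)
    _ ≤ α * frobNorm Z := by
        exact mul_le_mul_of_nonneg_left (pt_contract PT hidem hsa Z) hα0


end
end

section
/- (Optimality certificate for errors-and-erasures convex program.) Let Φ ⊆ [n₁]×[n₂], A* supported on Ω ⊆ Φ, B* low-rank with SVD UΣVᵀ and tangent space T, and Γ = Φ∖Ω. Suppose Γᶜ ∩ T = {0} and there exists Q ∈ ℝ^{n₁×n₂} with P_{Φᶜ}(Q) = 0, P_T(Q) = UVᵀ, ‖P_{T⊥}(Q)‖ < 1, P_{Γᶜ}(Q) = γ·P_Φ(sgn(A*)), and ‖P_Γ(Q)‖_∞ < γ. Then (P_Φ(A*), B*) is the unique optimal solution of: minimize γ‖A‖₁ + ‖B‖_* subject to P_Φ(A+B) = P_Φ(A*+B*). -/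
/-!
Write a competitor as `(A* + ΔA, B* + ΔB)` with `P_Φ(ΔA + ΔB) = 0`. The subgradient inequalities
of the `ℓ₁` norm at `A*` and of the nuclear norm at `B*`, together with `⟨Q, ΔA + ΔB⟩ = 0` and the
prescribed components of `Q`, show that the objective grows by at least the two gaps
`γ ‖P_{Ωᶜ} ΔA‖₁ - ⟨P_Γ Q, ΔA⟩` and `‖P_{T⊥} ΔB‖_* - ⟨P_{T⊥} Q, P_{T⊥} ΔB⟩`. Since `|Q| < γ` on
`Γ ⊆ Ωᶜ` and `‖P_{T⊥} Q‖ < 1`, both gaps are nonnegative and vanish only if `ΔA` is supported on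
`Ω` and `ΔB ∈ T`. Then `ΔB` vanishes on `Γ`, so `ΔB = 0` because `Γᶜ ∩ T = {0}`, and `ΔA = 0`.

The nuclear norm enters through the singular value decomposition built from the spectral
decomposition of `MᵀM`: it gives `⟨X, M⟩ ≤ ‖X‖ ‖M‖_*`, with equality for the polar factor of `M`.
-/

open Matrix

noncomputable section

def l1Norm {m n : ℕ} (M : Matrix (Fin m) (Fin n) ℝ) : ℝ := ∑ i, ∑ j, |M i j|

def nuclearNorm {m n : ℕ} (M : Matrix (Fin m) (Fin n) ℝ) : ℝ :=
  ∑ i, Real.sqrt ((show (Mᵀ * M).IsHermitian by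
    simpa [Matrix.conjTranspose_eq_transpose_of_trivial] using
      Matrix.isHermitian_conjTranspose_mul_self M).eigenvalues i)

section SpectralNorm

variable {m n : ℕ}

lemma norm_toLp_sq (v : Fin n → ℝ) :
    ‖(WithLp.toLp 2 v : EuclideanSpace ℝ (Fin n))‖ ^ 2 = v ⬝ᵥ v := by
  rw [← real_inner_self_eq_norm_sq, EuclideanSpace.inner_toLp_toLp, star_trivial]

lemma norm_mulVec_le_specNorm (X : Matrix (Fin m) (Fin n) ℝ) (v : Fin n → ℝ) :
    ‖(WithLp.toLp 2 (X *ᵥ v) : EuclideanSpace ℝ (Fin m))‖ ≤ specNorm X * ‖WithLp.toLp 2 v‖ :=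
  (LinearMap.toContinuousLinearMap (toEuclideanLin X)).le_opNorm (WithLp.toLp 2 v)

lemma dotProduct_mulVec_le_specNorm (X : Matrix (Fin m) (Fin n) ℝ) {a : Fin m → ℝ}
    {b : Fin n → ℝ} (ha : a ⬝ᵥ a ≤ 1) (hb : b ⬝ᵥ b ≤ 1) : a ⬝ᵥ (X *ᵥ b) ≤ specNorm X := by
  have hnorm : ∀ {k} (v : Fin k → ℝ), v ⬝ᵥ v ≤ 1 →
      ‖(WithLp.toLp 2 v : EuclideanSpace ℝ (Fin k))‖ ≤ 1 :=
    fun v hv => by nlinarith [norm_toLp_sq v, norm_nonneg (WithLp.toLp 2 v : EuclideanSpace ℝ _)]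
  have hX : 0 ≤ specNorm X := norm_nonneg _
  calc a ⬝ᵥ (X *ᵥ b)
      = inner ℝ (WithLp.toLp 2 a : EuclideanSpace ℝ (Fin m)) (WithLp.toLp 2 (X *ᵥ b)) := by
        rw [EuclideanSpace.inner_toLp_toLp, star_trivial, dotProduct_comm]
    _ ≤ ‖(WithLp.toLp 2 a : EuclideanSpace ℝ (Fin m))‖ * ‖WithLp.toLp 2 (X *ᵥ b)‖ :=
        real_inner_le_norm _ _
    _ ≤ 1 * (specNorm X * 1) := by
        gcongr
        · exact hnorm a ha
        · exact (norm_mulVec_le_specNorm X b).trans (mul_le_mul_of_nonneg_left (hnorm b hb) hX)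
    _ = specNorm X := by ring

lemma specNorm_le_one_of_dotProduct_le (X : Matrix (Fin m) (Fin n) ℝ)
    (h : ∀ v, (X *ᵥ v) ⬝ᵥ (X *ᵥ v) ≤ v ⬝ᵥ v) : specNorm X ≤ 1 := by
  refine ContinuousLinearMap.opNorm_le_bound _ zero_le_one fun x => ?_
  change ‖(WithLp.toLp 2 (X *ᵥ x.ofLp) : EuclideanSpace ℝ (Fin m))‖ ≤ 1 * ‖WithLp.toLp 2 x.ofLp‖
  rw [one_mul, ← sq_le_sq₀ (norm_nonneg _) (norm_nonneg _), norm_toLp_sq, norm_toLp_sq]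
  exact h _

end SpectralNorm

section FrobeniusInner

variable {m n : ℕ}

lemma finner_eq_trace (A B : Matrix (Fin m) (Fin n) ℝ) : finner A B = trace (Aᵀ * B) := by
  simp only [finner, trace, diag_apply, mul_apply, transpose_apply]
  exact Finset.sum_comm

lemma finner_zero_left (A : Matrix (Fin m) (Fin n) ℝ) : finner 0 A = 0 := by
  simp [finner]

lemma finner_add_right (A B C : Matrix (Fin m) (Fin n) ℝ) :
    finner A (B + C) = finner A B + finner A C := by
  simp only [finner_eq_trace, Matrix.mul_add, trace_add]

lemma finner_add_left (A B C : Matrix (Fin m) (Fin n) ℝ) :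
    finner (A + B) C = finner A C + finner B C := by
  simp only [finner_eq_trace, transpose_add, Matrix.add_mul, trace_add]

lemma finner_sub_left (A B C : Matrix (Fin m) (Fin n) ℝ) :
    finner (A - B) C = finner A C - finner B C := by
  simp only [finner_eq_trace, transpose_sub, Matrix.sub_mul, trace_sub]

lemma finner_smul_left (c : ℝ) (A B : Matrix (Fin m) (Fin n) ℝ) :
    finner (c • A) B = c * finner A B := by
  simp only [finner_eq_trace, transpose_smul, Matrix.smul_mul, trace_smul, smul_eq_mul]

lemma finner_smul_right (c : ℝ) (A B : Matrix (Fin m) (Fin n) ℝ) :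
    finner A (c • B) = c * finner A B := by
  simp only [finner_eq_trace, Matrix.mul_smul, trace_smul, smul_eq_mul]

lemma finner_sum_right {ι : Type*} (s : Finset ι) (A : Matrix (Fin m) (Fin n) ℝ)
    (B : ι → Matrix (Fin m) (Fin n) ℝ) : finner A (∑ k ∈ s, B k) = ∑ k ∈ s, finner A (B k) := by
  simp only [finner_eq_trace, Matrix.mul_sum, trace_sum]

lemma finner_vecMulVec (X : Matrix (Fin m) (Fin n) ℝ) (a : Fin m → ℝ) (b : Fin n → ℝ) :
    finner X (vecMulVec a b) = a ⬝ᵥ (X *ᵥ b) := by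
  simp only [finner, vecMulVec_apply, dotProduct, mulVec, Finset.mul_sum]
  exact Finset.sum_congr rfl fun i _ => Finset.sum_congr rfl fun j _ => by ring

lemma finner_mul_eq_transpose_mul {k : ℕ} (W : Matrix (Fin m) (Fin n) ℝ)
    (A : Matrix (Fin m) (Fin k) ℝ) (Y : Matrix (Fin k) (Fin n) ℝ) :
    finner W (A * Y) = finner (Aᵀ * W) Y := by
  rw [finner_eq_trace, finner_eq_trace, transpose_mul, transpose_transpose, Matrix.mul_assoc]

lemma finner_mul_eq_mul_transpose {k : ℕ} (W : Matrix (Fin m) (Fin n) ℝ)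
    (Y : Matrix (Fin m) (Fin k) ℝ) (B : Matrix (Fin k) (Fin n) ℝ) :
    finner W (Y * B) = finner (W * Bᵀ) Y := by
  rw [finner_eq_trace, finner_eq_trace, transpose_mul, transpose_transpose, ← Matrix.mul_assoc,
    trace_mul_comm, Matrix.mul_assoc]

lemma finner_sum_smul_vecMulVec_le {ι : Type*} {s : Finset ι} (X : Matrix (Fin m) (Fin n) ℝ)
    (c : ι → ℝ) (a : ι → Fin m → ℝ) (b : ι → Fin n → ℝ) (hc : ∀ k ∈ s, 0 ≤ c k)
    (ha : ∀ k ∈ s, a k ⬝ᵥ a k ≤ 1) (hb : ∀ k ∈ s, b k ⬝ᵥ b k ≤ 1) :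
    finner X (∑ k ∈ s, c k • vecMulVec (a k) (b k)) ≤ specNorm X * ∑ k ∈ s, c k := by
  rw [finner_sum_right, Finset.mul_sum]
  refine Finset.sum_le_sum fun k hk => ?_
  rw [finner_smul_right, finner_vecMulVec, mul_comm]
  exact mul_le_mul_of_nonneg_right (dotProduct_mulVec_le_specNorm X (ha k hk) (hb k hk)) (hc k hk)

end FrobeniusInner

section Orthonormal

variable {m n : ℕ} {ι κ : Type*} [DecidableEq ι] [DecidableEq κ]

def IsOrthonormalOn (s : Finset ι) (p : ι → Fin n → ℝ) : Prop :=
  ∀ k ∈ s, ∀ l ∈ s, p k ⬝ᵥ p l = if k = l then 1 else 0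

lemma IsOrthonormalOn.dotProduct_self {s : Finset ι} {p : ι → Fin n → ℝ}
    (hp : IsOrthonormalOn s p) {k : ι} (hk : k ∈ s) : p k ⬝ᵥ p k = 1 := by
  simpa using hp k hk k hk

lemma IsOrthonormalOn.disjSum {s : Finset ι} {t : Finset κ} {p : ι → Fin n → ℝ}
    {p' : κ → Fin n → ℝ} (hp : IsOrthonormalOn s p) (hp' : IsOrthonormalOn t p')
    (horth : ∀ k ∈ s, ∀ l ∈ t, p k ⬝ᵥ p' l = 0) :
    IsOrthonormalOn (s.disjSum t) (Sum.elim p p') := by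
  rintro (k | k) hk (l | l) hl <;>
    simp only [Finset.inl_mem_disjSum, Finset.inr_mem_disjSum] at hk hl
  · simpa using hp k hk l hl
  · simpa using horth k hk l hl
  · simpa [dotProduct_comm] using horth l hl k hk
  · simpa using hp' k hk l hl

lemma IsOrthonormalOn.sum_smul_dotProduct_sum_smul {s : Finset ι} {q : ι → Fin m → ℝ}
    (hq : IsOrthonormalOn s q) (c d : ι → ℝ) :
    (∑ k ∈ s, c k • q k) ⬝ᵥ (∑ l ∈ s, d l • q l) = ∑ k ∈ s, c k * d k := by
  simp only [sum_dotProduct, dotProduct_sum, smul_dotProduct, dotProduct_smul, smul_eq_mul]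
  refine Finset.sum_congr rfl fun k hk => ?_
  rw [Finset.sum_eq_single_of_mem k hk fun l hl hlk => by rw [hq l hl k hk, if_neg hlk, mul_zero],
    hq k hk k hk, if_pos rfl]
  ring

lemma specNorm_sum_vecMulVec_le_one {s : Finset ι} {p : ι → Fin n → ℝ} {q : ι → Fin m → ℝ}
    (hp : IsOrthonormalOn s p) (hq : IsOrthonormalOn s q) :
    specNorm (∑ k ∈ s, vecMulVec (q k) (p k)) ≤ 1 := by
  refine specNorm_le_one_of_dotProduct_le _ fun w => ?_
  set c : ι → ℝ := fun k => p k ⬝ᵥ w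
  set y := ∑ k ∈ s, c k • p k
  have hXw : (∑ k ∈ s, vecMulVec (q k) (p k)) *ᵥ w = ∑ k ∈ s, c k • q k := by
    simp only [sum_mulVec, vecMulVec_mulVec, op_smul_eq_smul, c]
  have hwy : w ⬝ᵥ y = ∑ k ∈ s, c k * c k := by
    simp only [y, dotProduct_comm w, sum_dotProduct, smul_dotProduct, smul_eq_mul]
    rfl
  have hyy : y ⬝ᵥ y = ∑ k ∈ s, c k * c k := hp.sum_smul_dotProduct_sum_smul c c
  have hbessel : 0 ≤ (w - y) ⬝ᵥ (w - y) := Finset.sum_nonneg fun i _ => mul_self_nonneg _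
  rw [hXw, hq.sum_smul_dotProduct_sum_smul]
  simp only [sub_dotProduct, dotProduct_sub, dotProduct_comm y w, hwy, hyy] at hbessel
  linarith

end Orthonormal

section SingularValueDecomposition

variable {m n : ℕ} (M : Matrix (Fin m) (Fin n) ℝ)

lemma isHermitian_transpose_mul_self : (Mᵀ * M).IsHermitian := by
  simpa [conjTranspose_eq_transpose_of_trivial] using isHermitian_conjTranspose_mul_self M

def gramEigenvalue (j : Fin n) : ℝ := (isHermitian_transpose_mul_self M).eigenvalues j

def singularValue (j : Fin n) : ℝ := √(gramEigenvalue M j)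

def rightSingularVector (j : Fin n) : Fin n → ℝ :=
  ((isHermitian_transpose_mul_self M).eigenvectorBasis j).ofLp

def leftSingularVector (j : Fin n) : Fin m → ℝ :=
  (singularValue M j)⁻¹ • (M *ᵥ rightSingularVector M j)

def singularSupport : Finset (Fin n) := Finset.univ.filter fun j => singularValue M j ≠ 0

lemma nuclearNorm_eq_sum_singularSupport :
    nuclearNorm M = ∑ j ∈ singularSupport M, singularValue M j :=
  (Finset.sum_filter_ne_zero _).symm

lemma rightSingularVector_dotProduct (j k : Fin n) :
    rightSingularVector M j ⬝ᵥ rightSingularVector M k = if j = k then 1 else 0 := by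
  have h := orthonormal_iff_ite.mp
    (isHermitian_transpose_mul_self M).eigenvectorBasis.orthonormal j k
  rwa [EuclideanSpace.inner_eq_star_dotProduct, star_trivial, dotProduct_comm] at h

lemma sum_vecMulVec_rightSingularVector :
    ∑ j, vecMulVec (rightSingularVector M j) (rightSingularVector M j) = 1 := by
  have h := Unitary.coe_mul_star_self (isHermitian_transpose_mul_self M).eigenvectorUnitary
  ext a b
  rw [← h]
  simp [Matrix.sum_apply, vecMulVec_apply, mul_apply, rightSingularVector]

lemma transpose_mul_self_mulVec_rightSingularVector (j : Fin n) :
    (Mᵀ * M) *ᵥ rightSingularVector M j = gramEigenvalue M j • rightSingularVector M j :=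
  (isHermitian_transpose_mul_self M).mulVec_eigenvectorBasis j

lemma mulVec_dotProduct_mulVec_rightSingularVector (j k : Fin n) :
    (M *ᵥ rightSingularVector M j) ⬝ᵥ (M *ᵥ rightSingularVector M k) =
      if j = k then gramEigenvalue M j else 0 := by
  rw [dotProduct_mulVec, ← mulVec_transpose, mulVec_mulVec,
    transpose_mul_self_mulVec_rightSingularVector, smul_dotProduct, rightSingularVector_dotProduct]
  simp

lemma sq_singularValue (j : Fin n) : singularValue M j ^ 2 = gramEigenvalue M j := by
  have h := mulVec_dotProduct_mulVec_rightSingularVector M j j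
  rw [if_pos rfl] at h
  exact Real.sq_sqrt (h ▸ dotProduct_self_star_nonneg _)

lemma singularValue_nonneg (j : Fin n) : 0 ≤ singularValue M j := Real.sqrt_nonneg _

lemma mulVec_rightSingularVector (j : Fin n) :
    M *ᵥ rightSingularVector M j = singularValue M j • leftSingularVector M j := by
  by_cases hs : singularValue M j = 0
  · have h := mulVec_dotProduct_mulVec_rightSingularVector M j j
    rw [if_pos rfl, ← sq_singularValue, hs, sq, zero_mul, dotProduct_self_eq_zero] at h
    rw [h, hs, zero_smul]
  · rw [leftSingularVector, smul_smul, mul_inv_cancel₀ hs, one_smul]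

lemma isOrthonormalOn_rightSingularVector :
    IsOrthonormalOn (singularSupport M) (rightSingularVector M) :=
  fun j _ k _ => rightSingularVector_dotProduct M j k

lemma isOrthonormalOn_leftSingularVector :
    IsOrthonormalOn (singularSupport M) (leftSingularVector M) := by
  intro j hj k _
  have hs : singularValue M j ≠ 0 := (Finset.mem_filter.mp hj).2
  rw [leftSingularVector, leftSingularVector, smul_dotProduct, dotProduct_smul,
    mulVec_dotProduct_mulVec_rightSingularVector, ← sq_singularValue]
  split_ifs with hjk
  · subst hjk
    simp only [smul_eq_mul]
    field_simp
  · simp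

lemma eq_sum_singularSupport :
    M = ∑ j ∈ singularSupport M,
      singularValue M j • vecMulVec (leftSingularVector M j) (rightSingularVector M j) := by
  rw [singularSupport, Finset.sum_filter_of_ne (p := fun j => singularValue M j ≠ 0)
    fun j _ h hs => h (by rw [hs, zero_smul])]
  calc M = M * ∑ j, vecMulVec (rightSingularVector M j) (rightSingularVector M j) := by
        rw [sum_vecMulVec_rightSingularVector, Matrix.mul_one]
    _ = _ := by
      simp only [Matrix.mul_sum, mul_vecMulVec, mulVec_rightSingularVector, smul_vecMulVec]

end SingularValueDecomposition

section NuclearNorm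

variable {m n : ℕ}

lemma nuclearNorm_nonneg (M : Matrix (Fin m) (Fin n) ℝ) : 0 ≤ nuclearNorm M :=
  Finset.sum_nonneg fun _ _ => Real.sqrt_nonneg _

lemma nuclearNorm_pos {M : Matrix (Fin m) (Fin n) ℝ} (hM : M ≠ 0) : 0 < nuclearNorm M := by
  have hne : (singularSupport M).Nonempty := by
    rw [Finset.nonempty_iff_ne_empty]
    intro h
    exact hM (by rw [eq_sum_singularSupport M, h, Finset.sum_empty])
  rw [nuclearNorm_eq_sum_singularSupport]
  exact Finset.sum_pos (fun j hj => (singularValue_nonneg M j).lt_of_ne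
    (Finset.mem_filter.mp hj).2.symm) hne

lemma finner_le_specNorm_mul_nuclearNorm (X M : Matrix (Fin m) (Fin n) ℝ) :
    finner X M ≤ specNorm X * nuclearNorm M := by
  conv_lhs => rw [eq_sum_singularSupport M]
  rw [nuclearNorm_eq_sum_singularSupport]
  exact finner_sum_smul_vecMulVec_le X _ _ _ (fun j _ => singularValue_nonneg M j)
    (fun j hj => ((isOrthonormalOn_leftSingularVector M).dotProduct_self hj).le)
    (fun j hj => ((isOrthonormalOn_rightSingularVector M).dotProduct_self hj).le)

lemma finner_le_nuclearNorm {X : Matrix (Fin m) (Fin n) ℝ} (hX : specNorm X ≤ 1)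
    (M : Matrix (Fin m) (Fin n) ℝ) : finner X M ≤ nuclearNorm M :=
  (finner_le_specNorm_mul_nuclearNorm X M).trans
    (mul_le_of_le_one_left (nuclearNorm_nonneg M) hX)

lemma finner_lt_nuclearNorm {X M : Matrix (Fin m) (Fin n) ℝ} (hX : specNorm X < 1)
    (hM : M ≠ 0) : finner X M < nuclearNorm M :=
  (finner_le_specNorm_mul_nuclearNorm X M).trans_lt (mul_lt_of_lt_one_left (nuclearNorm_pos hM) hX)

/-- The factor `U_M V_Mᵀ` of a compact singular value decomposition `M = U_M Σ_M V_Mᵀ`. -/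
def polarFactor (M : Matrix (Fin m) (Fin n) ℝ) : Matrix (Fin m) (Fin n) ℝ :=
  ∑ j ∈ singularSupport M, vecMulVec (leftSingularVector M j) (rightSingularVector M j)

lemma polarFactor_mulVec_rightSingularVector (M : Matrix (Fin m) (Fin n) ℝ) {k : Fin n}
    (hk : k ∈ singularSupport M) :
    polarFactor M *ᵥ rightSingularVector M k = leftSingularVector M k := by
  simp only [polarFactor, sum_mulVec, vecMulVec_mulVec, op_smul_eq_smul,
    rightSingularVector_dotProduct, ite_smul, one_smul, zero_smul, Finset.sum_ite_eq', if_pos hk]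

lemma finner_polarFactor_self (M : Matrix (Fin m) (Fin n) ℝ) :
    finner (polarFactor M) M = nuclearNorm M := by
  nth_rw 2 [eq_sum_singularSupport M]
  rw [nuclearNorm_eq_sum_singularSupport, finner_sum_right]
  refine Finset.sum_congr rfl fun j hj => ?_
  rw [finner_smul_right, finner_vecMulVec, polarFactor_mulVec_rightSingularVector M hj,
    (isOrthonormalOn_leftSingularVector M).dotProduct_self hj, mul_one]

lemma specNorm_polarFactor_le_one (M : Matrix (Fin m) (Fin n) ℝ) : specNorm (polarFactor M) ≤ 1 :=
  specNorm_sum_vecMulVec_le_one (isOrthonormalOn_rightSingularVector M)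
    (isOrthonormalOn_leftSingularVector M)

lemma nuclearNorm_le_of_eq_sum {ι : Type*} {s : Finset ι} {M : Matrix (Fin m) (Fin n) ℝ}
    (c : ι → ℝ) (a : ι → Fin m → ℝ) (b : ι → Fin n → ℝ) (hc : ∀ k ∈ s, 0 ≤ c k)
    (ha : ∀ k ∈ s, a k ⬝ᵥ a k ≤ 1) (hb : ∀ k ∈ s, b k ⬝ᵥ b k ≤ 1)
    (hM : M = ∑ k ∈ s, c k • vecMulVec (a k) (b k)) : nuclearNorm M ≤ ∑ k ∈ s, c k := by
  have h := finner_sum_smul_vecMulVec_le (polarFactor M) c a b hc ha hb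
  rw [← hM, finner_polarFactor_self] at h
  exact h.trans (mul_le_of_le_one_left (Finset.sum_nonneg hc) (specNorm_polarFactor_le_one M))

end NuclearNorm

section TangentSpace

variable {m n r : ℕ} (U : Matrix (Fin m) (Fin r) ℝ) (V : Matrix (Fin n) (Fin r) ℝ)

lemma isOrthonormalOn_transpose {k : ℕ} {A : Matrix (Fin k) (Fin r) ℝ} (hA : Aᵀ * A = 1) :
    IsOrthonormalOn Finset.univ Aᵀ := fun i _ j _ => by
  rw [← one_apply, ← hA, mul_apply']
  rfl

lemma mul_diagonal_mul_transpose (σ : Fin r → ℝ) :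
    U * diagonal σ * Vᵀ = ∑ k, σ k • vecMulVec (Uᵀ k) (Vᵀ k) := by
  ext i j
  rw [mul_apply]
  simp only [mul_diagonal, Matrix.sum_apply, Matrix.smul_apply, vecMulVec_apply, transpose_apply,
    smul_eq_mul]
  exact Finset.sum_congr rfl fun k _ => by ring

lemma mul_transpose_eq_sum : U * Vᵀ = ∑ k, vecMulVec (Uᵀ k) (Vᵀ k) := by
  simpa using mul_diagonal_mul_transpose U V 1

lemma finner_mul_transpose_mul_diagonal (hU : Uᵀ * U = 1) (hV : Vᵀ * V = 1) (σ : Fin r → ℝ) :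
    finner (U * Vᵀ) (U * diagonal σ * Vᵀ) = ∑ k, σ k := by
  rw [finner_eq_trace, transpose_mul, transpose_transpose, Matrix.mul_assoc V,
    ← Matrix.mul_assoc Uᵀ, ← Matrix.mul_assoc Uᵀ, hU, Matrix.one_mul, trace_mul_comm,
    Matrix.mul_assoc, hV, Matrix.mul_one, trace_diagonal]

lemma projT_eq (X : Matrix (Fin m) (Fin n) ℝ) :
    projT U V X = U * (Uᵀ * X) + (X - U * Uᵀ * X) * V * Vᵀ := by
  simp only [projT, Matrix.sub_mul, Matrix.mul_assoc]
  abel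

lemma exists_projT_eq_add (X : Matrix (Fin m) (Fin n) ℝ) :
    ∃ (Y : Matrix (Fin n) (Fin r) ℝ) (Z : Matrix (Fin m) (Fin r) ℝ),
      projT U V X = U * Yᵀ + Z * Vᵀ :=
  ⟨(Uᵀ * X)ᵀ, (X - U * Uᵀ * X) * V, by rw [projT_eq, transpose_transpose]⟩

lemma transpose_mul_sub_projT (hU : Uᵀ * U = 1) (X : Matrix (Fin m) (Fin n) ℝ) :
    Uᵀ * (X - projT U V X) = 0 := by
  simp only [projT, Matrix.mul_sub, Matrix.mul_add, ← Matrix.mul_assoc, hU, Matrix.one_mul]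
  abel

lemma sub_projT_mul (hV : Vᵀ * V = 1) (X : Matrix (Fin m) (Fin n) ℝ) :
    (X - projT U V X) * V = 0 := by
  simp only [projT, Matrix.sub_mul, Matrix.add_mul, Matrix.mul_assoc, hV, Matrix.mul_one]
  abel

lemma finner_projT_eq_zero {W : Matrix (Fin m) (Fin n) ℝ} (hUW : Uᵀ * W = 0) (hWV : W * V = 0)
    (X : Matrix (Fin m) (Fin n) ℝ) : finner W (projT U V X) = 0 := by
  rw [projT_eq, finner_add_right, finner_mul_eq_transpose_mul, hUW, finner_zero_left,
    finner_mul_eq_mul_transpose, transpose_transpose, hWV, finner_zero_left, add_zero]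

variable {M : Matrix (Fin m) (Fin n) ℝ}

lemma transpose_mulVec_leftSingularVector (hUM : Uᵀ * M = 0) (j : Fin n) :
    Uᵀ *ᵥ leftSingularVector M j = 0 := by
  rw [leftSingularVector, mulVec_smul, mulVec_mulVec, hUM, zero_mulVec, smul_zero]

lemma transpose_mulVec_rightSingularVector (hMV : M * V = 0) {j : Fin n}
    (hj : j ∈ singularSupport M) : Vᵀ *ᵥ rightSingularVector M j = 0 := by
  have hgram : Vᵀ * (Mᵀ * M) = 0 := by
    rw [← Matrix.mul_assoc, ← transpose_mul, hMV, transpose_zero, Matrix.zero_mul]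
  have heig : gramEigenvalue M j ≠ 0 := by
    rw [← sq_singularValue]
    exact pow_ne_zero 2 (Finset.mem_filter.mp hj).2
  have h := congrArg (Vᵀ *ᵥ ·) (transpose_mul_self_mulVec_rightSingularVector M j)
  simp only [mulVec_mulVec, hgram, zero_mulVec, mulVec_smul] at h
  exact (smul_eq_zero.mp h.symm).resolve_left heig

lemma transpose_mul_polarFactor (hUM : Uᵀ * M = 0) : Uᵀ * polarFactor M = 0 := by
  simp only [polarFactor, Matrix.mul_sum, mul_vecMulVec,
    transpose_mulVec_leftSingularVector U hUM, zero_vecMulVec, Finset.sum_const_zero]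

lemma polarFactor_mul (hMV : M * V = 0) : polarFactor M * V = 0 := by
  simp only [polarFactor, Matrix.sum_mul, vecMulVec_mul, ← mulVec_transpose]
  refine Finset.sum_eq_zero fun j hj => ?_
  ext
  simp [transpose_mulVec_rightSingularVector V hMV hj, vecMulVec_apply]

lemma specNorm_mul_transpose_add_polarFactor_le_one (hU : Uᵀ * U = 1) (hV : Vᵀ * V = 1)
    (hUM : Uᵀ * M = 0) (hMV : M * V = 0) : specNorm (U * Vᵀ + polarFactor M) ≤ 1 := by
  have hsum : U * Vᵀ + polarFactor M = ∑ x ∈ Finset.univ.disjSum (singularSupport M),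
      vecMulVec (Sum.elim Uᵀ (leftSingularVector M) x) (Sum.elim Vᵀ (rightSingularVector M) x) := by
    rw [Finset.sum_disjSum, mul_transpose_eq_sum]
    rfl
  rw [hsum]
  refine specNorm_sum_vecMulVec_le_one
    ((isOrthonormalOn_transpose hV).disjSum (isOrthonormalOn_rightSingularVector M) ?_)
    ((isOrthonormalOn_transpose hU).disjSum (isOrthonormalOn_leftSingularVector M) ?_)
  · exact fun k _ j hj => congrFun (transpose_mulVec_rightSingularVector V hMV hj) k
  · exact fun k _ j _ => congrFun (transpose_mulVec_leftSingularVector U hUM j) k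

/-- The subgradient used is `U Vᵀ + W`, with `W` the polar factor of the component of `Δ`
orthogonal to `T`. -/
lemma le_nuclearNorm_add (hU : Uᵀ * U = 1) (hV : Vᵀ * V = 1) {σ : Fin r → ℝ}
    (hσ : ∀ k, 0 ≤ σ k) (Δ : Matrix (Fin m) (Fin n) ℝ) :
    nuclearNorm (U * diagonal σ * Vᵀ) + finner (U * Vᵀ) Δ + nuclearNorm (Δ - projT U V Δ) ≤
      nuclearNorm (U * diagonal σ * Vᵀ + Δ) := by
  set N := Δ - projT U V Δ
  have hUN : Uᵀ * N = 0 := transpose_mul_sub_projT U V hU Δ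
  have hNV : N * V = 0 := sub_projT_mul U V hV Δ
  have hUW := transpose_mul_polarFactor U hUN
  have hB : nuclearNorm (U * diagonal σ * Vᵀ) ≤ finner (U * Vᵀ) (U * diagonal σ * Vᵀ) := by
    rw [finner_mul_transpose_mul_diagonal U V hU hV]
    exact nuclearNorm_le_of_eq_sum σ Uᵀ Vᵀ (fun k _ => hσ k)
      (fun k hk => ((isOrthonormalOn_transpose hU).dotProduct_self hk).le)
      (fun k hk => ((isOrthonormalOn_transpose hV).dotProduct_self hk).le)
      (mul_diagonal_mul_transpose U V σ)
  have hWB : finner (polarFactor N) (U * diagonal σ * Vᵀ) = 0 := by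
    rw [Matrix.mul_assoc, finner_mul_eq_transpose_mul, hUW, finner_zero_left]
  have hWΔ : finner (polarFactor N) Δ = nuclearNorm N := by
    rw [← sub_add_cancel Δ (projT U V Δ), finner_add_right,
      finner_projT_eq_zero U V hUW (polarFactor_mul V hNV), add_zero, finner_polarFactor_self]
  calc _ ≤ finner (U * Vᵀ + polarFactor N) (U * diagonal σ * Vᵀ + Δ) := by
        rw [finner_add_left, finner_add_right, finner_add_right, hWB, hWΔ]
        linarith
    _ ≤ _ := finner_le_nuclearNorm
        (specNorm_mul_transpose_add_polarFactor_le_one U V hU hV hUN hNV) _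

lemma le_nuclearNorm_add_of_projT_eq (hU : Uᵀ * U = 1) (hV : Vᵀ * V = 1) {σ : Fin r → ℝ}
    (hσ : ∀ k, 0 ≤ σ k) {Q : Matrix (Fin m) (Fin n) ℝ} (hQ : projT U V Q = U * Vᵀ)
    (Δ : Matrix (Fin m) (Fin n) ℝ) :
    nuclearNorm (U * diagonal σ * Vᵀ) + finner Q Δ +
        (nuclearNorm (Δ - projT U V Δ) - finner (Q - projT U V Q) (Δ - projT U V Δ)) ≤
      nuclearNorm (U * diagonal σ * Vᵀ + Δ) := by
  have hWΔ : finner (Q - projT U V Q) Δ = finner (Q - projT U V Q) (Δ - projT U V Δ) := by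
    conv_lhs => rw [← sub_add_cancel Δ (projT U V Δ)]
    rw [finner_add_right, finner_projT_eq_zero U V (transpose_mul_sub_projT U V hU Q)
      (sub_projT_mul U V hV Q), add_zero]
  have h := le_nuclearNorm_add U V hU hV hσ Δ
  rw [← hQ, ← sub_sub_cancel Q (projT U V Q), finner_sub_left, hWΔ] at h
  linarith

end TangentSpace

section Entrywise

variable {m n : ℕ}

open Classical in
@[simp]
lemma projSet_apply (S : Set (Fin m × Fin n)) (M : Matrix (Fin m) (Fin n) ℝ) (i : Fin m)
    (j : Fin n) : projSet S M i j = if (i, j) ∈ S then M i j else 0 := by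
  simp [projSet]

lemma projSet_eq_self {S : Set (Fin m × Fin n)} {M : Matrix (Fin m) (Fin n) ℝ}
    (hM : ∀ i j, M i j ≠ 0 → (i, j) ∈ S) : projSet S M = M := by
  classical
  ext i j
  rw [projSet_apply, ite_eq_left_iff]
  exact fun hij => (not_imp_comm.mp (hM i j) hij).symm

lemma sub_projSet (S : Set (Fin m × Fin n)) (M : Matrix (Fin m) (Fin n) ℝ) :
    M - projSet S M = projSet Sᶜ M := by
  ext i j
  by_cases h : (i, j) ∈ S <;> simp [h]

lemma apply_eq_zero_of_projSet_eq_zero {S : Set (Fin m × Fin n)} {M : Matrix (Fin m) (Fin n) ℝ}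
    (hM : projSet S M = 0) {e : Fin m × Fin n} (he : e ∈ S) : M e.1 e.2 = 0 := by
  simpa [he] using congrFun (congrFun hM e.1) e.2

lemma finner_eq_zero_of_support {S : Set (Fin m × Fin n)} {Q D : Matrix (Fin m) (Fin n) ℝ}
    (hQ : ∀ e ∉ S, Q e.1 e.2 = 0) (hD : projSet S D = 0) : finner Q D = 0 :=
  Finset.sum_eq_zero fun i _ => Finset.sum_eq_zero fun j _ => by
    by_cases h : (i, j) ∈ S
    · rw [apply_eq_zero_of_projSet_eq_zero hD h, mul_zero]
    · rw [hQ (i, j) h, zero_mul]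

lemma ne_zero_of_sgnM_ne_zero {A : Matrix (Fin m) (Fin n) ℝ} {i : Fin m} {j : Fin n}
    (h : sgnM A i j ≠ 0) : A i j ≠ 0 :=
  fun hA => h (by simp [sgnM, hA])

lemma abs_add_sign_mul_le_abs_add (a d : ℝ) : |a| + Real.sign a * d ≤ |a + d| := by
  rcases lt_trichotomy a 0 with ha | rfl | ha
  · rw [Real.sign_of_neg ha, abs_of_neg ha]
    linarith [neg_abs_le (a + d)]
  · simp
  · rw [Real.sign_of_pos ha, abs_of_pos ha]
    linarith [le_abs_self (a + d)]

lemma le_l1Norm_add {S : Set (Fin m × Fin n)} {A : Matrix (Fin m) (Fin n) ℝ}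
    (hA : ∀ i j, A i j ≠ 0 → (i, j) ∈ S) (Δ : Matrix (Fin m) (Fin n) ℝ) :
    l1Norm A + finner (sgnM A) Δ + l1Norm (projSet Sᶜ Δ) ≤ l1Norm (A + Δ) := by
  simp only [l1Norm, finner, ← Finset.sum_add_distrib]
  refine Finset.sum_le_sum fun i _ => Finset.sum_le_sum fun j _ => ?_
  by_cases h : (i, j) ∈ S
  · simpa [h, sgnM] using abs_add_sign_mul_le_abs_add (A i j) (Δ i j)
  · have hA0 : A i j = 0 := not_imp_comm.mp (hA i j) h
    simp [h, sgnM, hA0]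

lemma mul_le_mul_abs_of_abs_le {q d γ : ℝ} (hq : |q| ≤ γ) : q * d ≤ γ * |d| :=
  (le_abs_self _).trans ((abs_mul q d).trans_le (mul_le_mul_of_nonneg_right hq (abs_nonneg d)))

lemma projSet_mul_le_mul_abs_projSet {Γ S : Set (Fin m × Fin n)} (hΓS : Γ ⊆ S)
    {Q : Matrix (Fin m) (Fin n) ℝ} {γ : ℝ} (hγ : 0 ≤ γ) (hQ : ∀ e ∈ Γ, |Q e.1 e.2| ≤ γ)
    (Δ : Matrix (Fin m) (Fin n) ℝ) (i : Fin m) (j : Fin n) :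
    projSet Γ Q i j * Δ i j ≤ γ * |projSet S Δ i j| := by
  by_cases hΓ : (i, j) ∈ Γ
  · simpa [hΓ, hΓS hΓ] using mul_le_mul_abs_of_abs_le (d := Δ i j) (hQ (i, j) hΓ)
  · simpa [hΓ] using mul_nonneg hγ (abs_nonneg (projSet S Δ i j))

lemma finner_projSet_le {Γ S : Set (Fin m × Fin n)} (hΓS : Γ ⊆ S)
    {Q : Matrix (Fin m) (Fin n) ℝ} {γ : ℝ} (hγ : 0 ≤ γ) (hQ : ∀ e ∈ Γ, |Q e.1 e.2| ≤ γ)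
    (Δ : Matrix (Fin m) (Fin n) ℝ) : finner (projSet Γ Q) Δ ≤ γ * l1Norm (projSet S Δ) := by
  simp only [finner, l1Norm, Finset.mul_sum]
  exact Finset.sum_le_sum fun i _ => Finset.sum_le_sum fun j _ =>
    projSet_mul_le_mul_abs_projSet hΓS hγ hQ Δ i j

lemma finner_projSet_lt {Γ S : Set (Fin m × Fin n)} (hΓS : Γ ⊆ S)
    {Q : Matrix (Fin m) (Fin n) ℝ} {γ : ℝ} (hγ : 0 < γ) (hQ : ∀ e ∈ Γ, |Q e.1 e.2| < γ)
    {Δ : Matrix (Fin m) (Fin n) ℝ} (hΔ : projSet S Δ ≠ 0) :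
    finner (projSet Γ Q) Δ < γ * l1Norm (projSet S Δ) := by
  have hle := projSet_mul_le_mul_abs_projSet hΓS hγ.le (fun e he => (hQ e he).le) Δ
  obtain ⟨i, j, hij⟩ : ∃ i j, projSet S Δ i j ≠ 0 := by
    by_contra! h
    exact hΔ (ext h)
  have hlt : projSet Γ Q i j * Δ i j < γ * |projSet S Δ i j| := by
    have hS : (i, j) ∈ S := by by_contra hS; simp [hS] at hij
    rw [projSet_apply, if_pos hS] at hij
    rw [projSet_apply S, if_pos hS]
    by_cases hΓ : (i, j) ∈ Γ
    · rw [projSet_apply, if_pos hΓ]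
      exact (le_abs_self _).trans_lt ((abs_mul _ _).trans_lt
        (mul_lt_mul_of_pos_right (hQ (i, j) hΓ) (abs_pos.mpr hij)))
    · simpa [hΓ] using mul_pos hγ (abs_pos.mpr hij)
  simp only [finner, l1Norm, Finset.mul_sum]
  exact Finset.sum_lt_sum (fun i _ => Finset.sum_le_sum fun j _ => hle i j)
    ⟨i, Finset.mem_univ i, Finset.sum_lt_sum (fun j _ => hle i j) ⟨j, Finset.mem_univ j, hlt⟩⟩

end Entrywise

section Certificate

variable {n₁ n₂ r : ℕ} {Φ Ω Γ : Set (Fin n₁ × Fin n₂)} {U : Matrix (Fin n₁) (Fin r) ℝ}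
  {V : Matrix (Fin n₂) (Fin r) ℝ} {ΔA ΔB : Matrix (Fin n₁) (Fin n₂) ℝ}

lemma objective_add_gaps_le {γ : ℝ} (hγ : 0 ≤ γ) {Astar : Matrix (Fin n₁) (Fin n₂) ℝ}
    (hAsupp : ∀ i j, Astar i j ≠ 0 → (i, j) ∈ Ω) (hU : Uᵀ * U = 1) (hV : Vᵀ * V = 1)
    {σ : Fin r → ℝ} (hσ : ∀ k, 0 ≤ σ k) {Q : Matrix (Fin n₁) (Fin n₂) ℝ}
    (hQΦ : ∀ e ∉ Φ, Q e.1 e.2 = 0) (hQT : projT U V Q = U * Vᵀ)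
    (hQsgn : γ • sgnM Astar = Q - projSet Γ Q) (hΔ : projSet Φ (ΔA + ΔB) = 0) :
    γ * l1Norm Astar + nuclearNorm (U * diagonal σ * Vᵀ) +
        (γ * l1Norm (projSet Ωᶜ ΔA) - finner (projSet Γ Q) ΔA) +
        (nuclearNorm (ΔB - projT U V ΔB) - finner (Q - projT U V Q) (ΔB - projT U V ΔB)) ≤
      γ * l1Norm (Astar + ΔA) + nuclearNorm (U * diagonal σ * Vᵀ + ΔB) := by
  have hl1 := mul_le_mul_of_nonneg_left (le_l1Norm_add hAsupp ΔA) hγ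
  have hsgnΔ : γ * finner (sgnM Astar) ΔA = finner Q ΔA - finner (projSet Γ Q) ΔA := by
    rw [← finner_smul_left, hQsgn, finner_sub_left]
  have hnuc := le_nuclearNorm_add_of_projT_eq U V hU hV hσ hQT ΔB
  have hQΔ : finner Q ΔA + finner Q ΔB = 0 := by
    rw [← finner_add_right, finner_eq_zero_of_support hQΦ hΔ]
  linarith

lemma eq_zero_of_projSet_compl_eq_zero_of_projT_eq_self (hΩΦ : Ω ⊆ Φ) (hΓ : Γ = Φ \ Ω)
    (hTrans : ∀ M : Matrix (Fin n₁) (Fin n₂) ℝ, (∀ e ∈ Γ, M e.1 e.2 = 0) →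
      (∃ (X : Matrix (Fin n₂) (Fin r) ℝ) (Y : Matrix (Fin n₁) (Fin r) ℝ),
        M = U * Xᵀ + Y * Vᵀ) → M = 0)
    (hΔ : projSet Φ (ΔA + ΔB) = 0) (hA : projSet Ωᶜ ΔA = 0) (hB : projT U V ΔB = ΔB) :
    ΔA = 0 ∧ ΔB = 0 := by
  have hΔ' : ∀ e ∈ Φ, ΔA e.1 e.2 + ΔB e.1 e.2 = 0 := fun e he => by
    simpa using apply_eq_zero_of_projSet_eq_zero hΔ he
  have hB0 : ΔB = 0 := by
    refine hTrans ΔB (fun e he => ?_) (hB ▸ exists_projT_eq_add U V ΔB)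
    rw [hΓ] at he
    linarith [hΔ' e he.1, apply_eq_zero_of_projSet_eq_zero hA he.2]
  refine ⟨?_, hB0⟩
  ext i j
  by_cases hΩ : (i, j) ∈ Ω
  · simpa [hB0] using hΔ' (i, j) (hΩΦ hΩ)
  · exact apply_eq_zero_of_projSet_eq_zero hA hΩ

end Certificate

theorem stmt14 (n₁ n₂ r : ℕ) (γ : ℝ) (hγ : 0 < γ)
    (Φ Ω : Set (Fin n₁ × Fin n₂)) (hΩΦ : Ω ⊆ Φ)
    (Astar Bstar : Matrix (Fin n₁) (Fin n₂) ℝ)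
    (hAsupp : ∀ i j, Astar i j ≠ 0 → (i, j) ∈ Ω)
    (U : Matrix (Fin n₁) (Fin r) ℝ) (V : Matrix (Fin n₂) (Fin r) ℝ)
    (hU : Uᵀ * U = 1) (hV : Vᵀ * V = 1)
    (σ : Fin r → ℝ) (hσ : ∀ k, 0 < σ k)
    (hB : Bstar = U * Matrix.diagonal σ * Vᵀ)
    (Γ : Set (Fin n₁ × Fin n₂)) (hΓ : Γ = Φ \ Ω)
    (hTrans : ∀ M : Matrix (Fin n₁) (Fin n₂) ℝ,
      (∀ e ∈ Γ, M e.1 e.2 = 0) →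
      (∃ (X : Matrix (Fin n₂) (Fin r) ℝ) (Y : Matrix (Fin n₁) (Fin r) ℝ),
        M = U * Xᵀ + Y * Vᵀ) →
      M = 0)
    (Q : Matrix (Fin n₁) (Fin n₂) ℝ)
    (hQ1 : ∀ e : Fin n₁ × Fin n₂, e ∉ Φ → Q e.1 e.2 = 0)
    (hQ2 : projT U V Q = U * Vᵀ)
    (hQ3 : specNorm (Q - projT U V Q) < 1)
    (hQ4 : projSet Γᶜ Q = γ • projSet Φ (sgnM Astar))
    (hQ5 : ∀ e ∈ Γ, |Q e.1 e.2| < γ) :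
    ∀ A B : Matrix (Fin n₁) (Fin n₂) ℝ,
      projSet Φ (A + B) = projSet Φ (Astar + Bstar) →
      ¬(A = projSet Φ Astar ∧ B = Bstar) →
      γ * l1Norm (projSet Φ Astar) + nuclearNorm Bstar < γ * l1Norm A + nuclearNorm B := by
  intro A B hfeas hne
  have hAΦ : projSet Φ Astar = Astar := projSet_eq_self fun i j h => hΩΦ (hAsupp i j h)
  rw [hAΦ] at hne ⊢
  have hΔ : projSet Φ ((A - Astar) + (B - Bstar)) = 0 := by
    rw [show A - Astar + (B - Bstar) = A + B - (Astar + Bstar) by abel]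
    exact (map_sub (projSetL Φ) _ _).trans (sub_eq_zero.mpr hfeas)
  have hsgn : γ • sgnM Astar = Q - projSet Γ Q := by
    rw [sub_projSet, hQ4, projSet_eq_self fun i j h => hΩΦ (hAsupp i j (ne_zero_of_sgnM_ne_zero h))]
  have hΓΩ : Γ ⊆ Ωᶜ := hΓ ▸ fun e he => he.2
  have hgap := objective_add_gaps_le hγ.le hAsupp hU hV (fun k => (hσ k).le) hQ1 hQ2 hsgn hΔ
  rw [← hB, add_sub_cancel, add_sub_cancel] at hgap
  have hgapA := finner_projSet_le hΓΩ hγ.le (fun e he => (hQ5 e he).le) (A - Astar)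
  have hgapB := finner_le_nuclearNorm hQ3.le (B - Bstar - projT U V (B - Bstar))
  refine lt_of_le_of_ne (by linarith) fun heq => hne ?_
  have hA0 : projSet Ωᶜ (A - Astar) = 0 := by
    by_contra h
    linarith [finner_projSet_lt hΓΩ hγ hQ5 h]
  have hB0 : B - Bstar - projT U V (B - Bstar) = 0 := by
    by_contra h
    linarith [finner_lt_nuclearNorm hQ3 h]
  obtain ⟨hA1, hB1⟩ := eq_zero_of_projSet_compl_eq_zero_of_projT_eq_self hΩΦ hΓ hTrans hΔ hA0
    (sub_eq_zero.mp hB0).symm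
  exact ⟨sub_eq_zero.mp hA1, sub_eq_zero.mp hB1⟩

end
end
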